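/- arXiv:2310.11167 — 10 statements merged into one kernel-verified Lean document; each statement's English description precedes it below -/
import Mathlib

section
/- For all positive integers s and t, the Ramsey number R(s,t) satisfies R(s,t) ≤ binom(s+t-2, t-1); that is, every graph on binom(s+t-2, t-1) vertices contains a clique of size s or an independent set of size t. -/
/-! Induction on `a + b`, finding an `(a + 1)`-clique or a `(b + 1)`-independent set among
`(a + b).choose b` vertices. By Pascal's rule a vertex `v` there has either
`(a + (b + 1)).choose (b + 1)` neighbours or `(a + 1 + b).choose b` non-neighbours; a clique among
its neighbours, or an independent set among its non-neighbours, grows by one when `v` is added. -/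

open Finset

namespace SimpleGraph

variable {V : Type*} (G : SimpleGraph V)

theorem exists_isNClique_one_of_nonempty {A : Finset V} (hA : A.Nonempty) :
    ∃ S ⊆ A, G.IsNClique 1 S :=
  ⟨{hA.choose}, singleton_subset_iff.mpr hA.choose_spec, isNClique_one.mpr ⟨_, rfl⟩⟩

variable [DecidableEq V]

theorem exists_isNClique_succ_of_subset_filter_adj [DecidableRel G.Adj] {A : Finset V} {v : V}
    {n : ℕ} (hv : v ∈ A)
    (h : ∃ S ⊆ A.filter (G.Adj v), G.IsNClique n S) : ∃ S ⊆ A, G.IsNClique (n + 1) S := by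
  obtain ⟨S, hSA, hS⟩ := h
  have hSadj : ∀ w ∈ S, G.Adj v w := fun w hw => (mem_filter.mp (hSA hw)).2
  exact ⟨insert v S, insert_subset hv (hSA.trans (filter_subset _ _)), hS.insert hSadj⟩

theorem card_filter_adj_add_card_filter_compl_adj [DecidableRel G.Adj] {A : Finset V} {v : V}
    (hv : v ∈ A) : #(A.filter (G.Adj v)) + #(A.filter (Gᶜ.Adj v)) + 1 = #A := by
  have hcompl : A.filter (Gᶜ.Adj v) = (A.erase v).filter (fun w => ¬G.Adj v w) := by
    ext w
    by_cases hw : v = w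
    · simp [← hw]
    · simp [hw, compl_adj, Ne.symm hw]
  have hadj : A.filter (G.Adj v) = (A.erase v).filter (G.Adj v) := by
    ext w
    by_cases hw : w = v <;> simp [hw]
  rw [hcompl, hadj, card_filter_add_card_filter_not, card_erase_add_one hv]

theorem exists_isNClique_or_compl_isNClique_of_choose_le (a b : ℕ) (A : Finset V)
    (hA : (a + b).choose b ≤ #A) :
    (∃ S ⊆ A, G.IsNClique (a + 1) S) ∨ ∃ S ⊆ A, Gᶜ.IsNClique (b + 1) S := by
  classical
  induction a generalizing b A with
  | zero => exact .inl (G.exists_isNClique_one_of_nonempty (card_pos.mp (by simpa using hA)))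
  | succ a iha =>
    induction b generalizing A with
    | zero => exact .inr (Gᶜ.exists_isNClique_one_of_nonempty (card_pos.mp (by simpa using hA)))
    | succ b ihb =>
      obtain ⟨v, hv⟩ : A.Nonempty := card_pos.mp ((Nat.choose_pos (by omega)).trans_le hA)
      have hpascal : (a + 1 + (b + 1)).choose (b + 1)
          = (a + 1 + b).choose b + (a + (b + 1)).choose (b + 1) := by
        rw [show a + 1 + (b + 1) = a + 1 + b + 1 by omega, Nat.choose_succ_succ,
          show a + 1 + b = a + (b + 1) by omega]
      have hsplit := G.card_filter_adj_add_card_filter_compl_adj hv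
      rcases le_or_gt ((a + (b + 1)).choose (b + 1)) #(A.filter (G.Adj v)) with hN | hN
      · rcases iha (b + 1) _ hN with hclique | hindep
        · exact .inl (G.exists_isNClique_succ_of_subset_filter_adj hv hclique)
        · exact .inr (hindep.imp fun S ⟨hS, h⟩ => ⟨hS.trans (filter_subset _ _), h⟩)
      · rcases ihb (A.filter (Gᶜ.Adj v)) (by omega) with hclique | hindep
        · exact .inl (hclique.imp fun S ⟨hS, h⟩ => ⟨hS.trans (filter_subset _ _), h⟩)
        · exact .inr (Gᶜ.exists_isNClique_succ_of_subset_filter_adj hv hindep)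

end SimpleGraph

/-- Erdős–Szekeres bound on Ramsey numbers: every graph on `(s+t-2).choose (t-1)`
vertices contains a clique of size `s` or an independent set of size `t`. -/
theorem ramsey_erdos_szekeres (s t : ℕ) (hs : 1 ≤ s) (ht : 1 ≤ t)
    (G : SimpleGraph (Fin ((s + t - 2).choose (t - 1)))) :
    (∃ S, G.IsNClique s S) ∨ (∃ S, Gᶜ.IsNClique t S) := by
  obtain ⟨a, rfl⟩ := Nat.exists_eq_add_of_le' hs
  obtain ⟨b, rfl⟩ := Nat.exists_eq_add_of_le' ht
  have hcard : (a + 1 + (b + 1) - 2).choose (b + 1 - 1) = (a + b).choose b := by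
    congr 1; omega
  rcases G.exists_isNClique_or_compl_isNClique_of_choose_le a b univ
      (by rw [card_univ, Fintype.card_fin, hcard]) with
    ⟨S, -, hS⟩ | ⟨S, -, hS⟩
  · exact .inl ⟨S, hS⟩
  · exact .inr ⟨S, hS⟩
end

section
/- If a graph G has an orientation of its edges with no directed path of length k (i.e., with k edges), then the chromatic number of G is at most k. -/
open Relation Function

/-- The set of lengths of injective `s`-paths ending at `v`. -/
private def ghrvSet {V : Type*} (s : V → V → Prop) (v : V) : Set ℕ :=
  {n | ∃ p : Fin (n + 1) → V, Function.Injective p ∧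
      (∀ i : Fin n, s (p i.castSucc) (p i.succ)) ∧ p (Fin.last n) = v}

private noncomputable def ghrvHeight {V : Type*} (s : V → V → Prop) (v : V) : ℕ :=
  sSup (ghrvSet s v)

private lemma ghrv_zero_mem {V : Type*} (s : V → V → Prop) (v : V) : 0 ∈ ghrvSet s v :=
  ⟨fun _ => v, fun a b _ => Fin.ext (by omega), fun i => i.elim0, rfl⟩

/-- Along a path, later vertices are reachable from earlier ones. -/
private lemma ghrv_reaches {V : Type*} {s : V → V → Prop} {n : ℕ} {p : Fin (n + 1) → V}
    (hp : ∀ i : Fin n, s (p i.castSucc) (p i.succ)) :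
    ∀ d : ℕ, ∀ i j : Fin (n + 1), (i : ℕ) + d = (j : ℕ) → ReflTransGen s (p i) (p j) := by
  intro d
  induction d with
  | zero =>
    intro i j h
    have : i = j := Fin.ext (by omega)
    subst this; exact .refl
  | succ d ih =>
    intro i j h
    have hj : (j : ℕ) ≤ n := Nat.lt_succ_iff.mp j.isLt
    have hi : (i : ℕ) < n := by omega
    have hstep := hp ⟨i, hi⟩
    have h1 : ((⟨i, hi⟩ : Fin n).castSucc) = i := Fin.ext rfl
    rw [h1] at hstep
    exact ReflTransGen.head hstep (ih ((⟨i, hi⟩ : Fin n).succ) j (by simp; omega))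

private lemma ghrv_mono {V : Type*} {s : V → V → Prop}
    (hacyc : ∀ w, ¬ TransGen s w w) (hbdd : ∀ w, BddAbove (ghrvSet s w))
    {u v : V} (huv : s u v) : ghrvHeight s u < ghrvHeight s v := by
  obtain ⟨p, hinj, hsteps, hend⟩ :
      ghrvHeight s u ∈ ghrvSet s u := Nat.sSup_mem ⟨0, ghrv_zero_mem s u⟩ (hbdd u)
  have hvnot : ∀ i, p i ≠ v := by
    intro i hiv
    have h1 : ReflTransGen s (p i) (p (Fin.last (ghrvHeight s u))) :=
      ghrv_reaches hsteps (ghrvHeight s u - (i : ℕ)) i (Fin.last (ghrvHeight s u))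
        (by simp [Fin.last]; omega)
    rw [hend, hiv] at h1
    exact hacyc v (TransGen.trans_right h1 (TransGen.single huv))
  have hmem : ghrvHeight s u + 1 ∈ ghrvSet s v := by
    refine ⟨Fin.snoc p v, ?_, ?_, by simp⟩
    · intro a b hab
      induction a using Fin.lastCases with
      | last =>
        induction b using Fin.lastCases with
        | last => rfl
        | cast b =>
          rw [Fin.snoc_last, Fin.snoc_castSucc] at hab
          exact absurd hab.symm (hvnot b)
      | cast a =>
        induction b using Fin.lastCases with
        | last =>
          rw [Fin.snoc_last, Fin.snoc_castSucc] at hab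
          exact absurd hab (hvnot a)
        | cast b =>
          rw [Fin.snoc_castSucc, Fin.snoc_castSucc] at hab
          rw [hinj hab]
    · intro i
      induction i using Fin.lastCases with
      | last =>
        have h2 : (Fin.last (ghrvHeight s u)).succ = Fin.last (ghrvHeight s u + 1) := by
          ext; simp
        rw [h2, Fin.snoc_last, Fin.snoc_castSucc, hend]
        exact huv
      | cast j =>
        rw [Fin.succ_castSucc, Fin.snoc_castSucc, Fin.snoc_castSucc]
        exact hsteps j
  have h3 : ghrvHeight s u + 1 ≤ ghrvHeight s v := le_csSup (hbdd v) hmem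
  omega

private lemma ghrv_tmono {V : Type*} {s : V → V → Prop}
    (hacyc : ∀ w, ¬ TransGen s w w) (hbdd : ∀ w, BddAbove (ghrvSet s w))
    {u v : V} (huv : TransGen s u v) : ghrvHeight s u < ghrvHeight s v := by
  induction huv with
  | single h => exact ghrv_mono hacyc hbdd h
  | tail _ h ih => exact lt_trans ih (ghrv_mono hacyc hbdd h)

private lemma ghrv_extend {V : Type*} {s : V → V → Prop} {u v : V} :
    ∀ {a b : V}, TransGen (fun x y => s x y ∨ (x = u ∧ y = v)) a b →
      TransGen s a b ∨ (ReflTransGen s a u ∧ ReflTransGen s v b) := by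
  intro a b h
  induction h with
  | single h =>
    rcases h with h | ⟨rfl, rfl⟩
    · exact .inl (.single h)
    · exact .inr ⟨.refl, .refl⟩
  | tail _ h ih =>
    rcases h with h | ⟨rfl, rfl⟩
    · rcases ih with ih | ⟨h1, h2⟩
      · exact .inl (ih.tail h)
      · exact .inr ⟨h1, h2.tail h⟩
    · rcases ih with ih | ⟨h1, _⟩
      · exact .inr ⟨ih.to_reflTransGen, .refl⟩
      · exact .inr ⟨h1, .refl⟩

/-- Gallai–Hasse–Roy–Vitaver: if a graph has an orientation with no directed
path with `k` edges, then its chromatic number is at most `k`. -/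
theorem gallai_hasse_roy_vitaver {V : Type*} [Fintype V] (G : SimpleGraph V) (k : ℕ)
    (r : V → V → Prop)
    (horient : ∀ u v, G.Adj u v ↔ (r u v ∨ r v u))
    (hasymm : ∀ u v, r u v → ¬ r v u)
    (hnopath : ¬ ∃ p : Fin (k + 1) → V, Function.Injective p ∧
      ∀ i : Fin k, r (p i.castSucc) (p i.succ)) :
    G.chromaticNumber ≤ (k : ℕ∞) := by
  classical
  -- the family of acyclic subrelations of `r`
  set T : Set (Set (V × V)) :=
    {s | (∀ q ∈ s, r q.1 q.2) ∧ ∀ w, ¬ TransGen (fun a b => (a, b) ∈ s) w w} with hT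
  have hTne : (∅ : Set (V × V)) ∈ T := by
    refine ⟨fun q hq => hq.elim, fun w hw => ?_⟩
    obtain ⟨c, h, -⟩ := Relation.TransGen.head'_iff.mp hw; exact h
  obtain ⟨s, hsT, hsmax⟩ := Set.Finite.exists_maximalFor id T (Set.toFinite T) ⟨∅, hTne⟩
  set s' : V → V → Prop := fun a b => (a, b) ∈ s with hs'
  have hsub : ∀ a b, s' a b → r a b := fun a b h => hsT.1 (a, b) h
  have hacyc : ∀ w, ¬ TransGen s' w w := hsT.2
  have hbound : ∀ v : V, ∀ n ∈ ghrvSet s' v, n < k := by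
    intro v n hn
    by_contra hlt
    push_neg at hlt
    obtain ⟨p, hinj, hsteps, -⟩ := hn
    have hle : k + 1 ≤ n + 1 := by omega
    refine hnopath ⟨p ∘ Fin.castLE hle, hinj.comp (Fin.castLE_injective hle), ?_⟩
    intro i
    have hi : (i : ℕ) < n := by omega
    have h1 := hsub _ _ (hsteps ⟨i, hi⟩)
    have e1 : Fin.castLE hle i.castSucc = (⟨(i : ℕ), hi⟩ : Fin n).castSucc := Fin.ext rfl
    have e2 : Fin.castLE hle i.succ = (⟨(i : ℕ), hi⟩ : Fin n).succ := Fin.ext rfl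
    simpa [Function.comp, e1, e2] using h1
  have hbdd : ∀ w, BddAbove (ghrvSet s' w) :=
    fun w => ⟨k, fun n hn => (hbound w n hn).le⟩
  have hlt : ∀ v, ghrvHeight s' v < k := fun v =>
    hbound v _ (Nat.sSup_mem ⟨0, ghrv_zero_mem s' v⟩ (hbdd v))
  -- for each `r`-edge, one direction lies in the transitive closure of `s'`
  have key : ∀ u v, r u v → TransGen s' u v ∨ TransGen s' v u := by
    intro u v huv
    by_cases hmem : (u, v) ∈ s
    · exact .inl (.single hmem)
    · have hne : u ≠ v := fun h => hasymm u v huv (h ▸ h ▸ huv)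
      have hs2 : s ∪ {(u, v)} ∉ T := by
        intro h2
        have := hsmax h2 (Set.subset_union_left)
        simp only [id] at this
        exact hmem (this (Set.mem_union_right _ rfl))
      rw [hT] at hs2
      simp only [Set.mem_setOf_eq, not_and, not_forall, not_not] at hs2
      have hsub2 : ∀ q ∈ s ∪ {(u, v)}, r q.1 q.2 := by
        rintro q (hq | hq)
        · exact hsT.1 q hq
        · rw [Set.mem_singleton_iff] at hq; subst hq; exact huv
      obtain ⟨w, hw⟩ := hs2 hsub2
      have hw' : TransGen (fun a b => s' a b ∨ (a = u ∧ b = v)) w w := by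
        refine TransGen.mono ?_ w w hw
        rintro a b (h | h)
        · exact .inl h
        · rw [Set.mem_singleton_iff] at h
          exact .inr ⟨congrArg Prod.fst h, congrArg Prod.snd h⟩
      rcases ghrv_extend hw' with h | ⟨h1, h2⟩
      · exact absurd h (hacyc w)
      · have h3 : ReflTransGen s' v u := h2.trans h1
        rcases h3.cases_head with h4 | ⟨c, h4, h5⟩
        · exact absurd h4 hne.symm
        · exact .inr (TransGen.head' h4 h5)
  have hcol : G.Colorable k := by
    refine ⟨SimpleGraph.Coloring.mk (fun v => ⟨ghrvHeight s' v, hlt v⟩) ?_⟩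
    intro u v huv hco
    have heq : ghrvHeight s' u = ghrvHeight s' v := congrArg Fin.val hco
    rcases (horient u v).1 huv with h | h <;>
      rcases key _ _ h with h2 | h2
    · exact absurd heq (ne_of_lt (ghrv_tmono hacyc hbdd h2))
    · exact absurd heq.symm (ne_of_lt (ghrv_tmono hacyc hbdd h2))
    · exact absurd heq.symm (ne_of_lt (ghrv_tmono hacyc hbdd h2))
    · exact absurd heq (ne_of_lt (ghrv_tmono hacyc hbdd h2))
  exact hcol.chromaticNumber_le
end

section
/- For every integer t ≥ 3, the disjoint union of two copies of K_{2t-3} is tidy. -/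
/-- A graph `H` is tidy (with respect to `t`) if it has at least two vertices and for
every partition of its vertex set into two nonempty parts `M`, `N`, either (U1) `M`
contains a clique `K` of size `t-1` and some vertex of `N` is anti-complete to `K`, or
(U2) `N` contains a clique `K` of size `t-1` and there are adjacent vertices `x ∈ M`
and `y ∈ N \ K` with both `x` and `y` anti-complete to `K`. -/
def Tidy {V : Type*} (t : ℕ) (H : SimpleGraph V) : Prop :=
  (∃ a b : V, a ≠ b) ∧
  ∀ M N : Set V, M.Nonempty → N.Nonempty → Disjoint M N → M ∪ N = Set.univ →
    ((∃ K : Finset V, (K : Set V) ⊆ M ∧ H.IsNClique (t - 1) K ∧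
        ∃ y ∈ N, ∀ w ∈ K, ¬ H.Adj y w) ∨
     (∃ K : Finset V, (K : Set V) ⊆ N ∧ H.IsNClique (t - 1) K ∧
        ∃ x ∈ M, ∃ y ∈ N, y ∉ K ∧ H.Adj x y ∧
          (∀ w ∈ K, ¬ H.Adj x w) ∧ (∀ w ∈ K, ¬ H.Adj y w))) 

private lemma clique_inl (n k : ℕ) (s : Finset (Fin n)) (h : s.card = k) :
    ((SimpleGraph.completeGraph (Fin n)) ⊕g (SimpleGraph.completeGraph (Fin n))).IsNClique k
      (s.image Sum.inl) := by
  constructor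
  · intro a ha b hb hne
    simp only [Finset.coe_image, Set.mem_image, Finset.mem_coe] at ha hb
    obtain ⟨a', -, rfl⟩ := ha
    obtain ⟨b', -, rfl⟩ := hb
    have : a' ≠ b' := fun hc => hne (by rw [hc])
    simp [this]
  · rw [Finset.card_image_of_injective _ Sum.inl_injective, h]

private lemma clique_inr (n k : ℕ) (s : Finset (Fin n)) (h : s.card = k) :
    ((SimpleGraph.completeGraph (Fin n)) ⊕g (SimpleGraph.completeGraph (Fin n))).IsNClique k
      (s.image Sum.inr) := by
  constructor
  · intro a ha b hb hne
    simp only [Finset.coe_image, Set.mem_image, Finset.mem_coe] at ha hb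
    obtain ⟨a', -, rfl⟩ := ha
    obtain ⟨b', -, rfl⟩ := hb
    have : a' ≠ b' := fun hc => hne (by rw [hc])
    simp [this]
  · rw [Finset.card_image_of_injective _ Sum.inr_injective, h]

/-- For `t ≥ 3`, the disjoint union of two copies of `K_{2t-3}` is tidy. -/
theorem two_K_two_t_sub_three_tidy (t : ℕ) (ht : 3 ≤ t) :
    Tidy t ((SimpleGraph.completeGraph (Fin (2 * t - 3))) ⊕g (SimpleGraph.completeGraph (Fin (2 * t - 3)))) := by
  set n := 2 * t - 3 with hn
  have hnpos : 0 < n := by omega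
  set H := (SimpleGraph.completeGraph (Fin n)) ⊕g (SimpleGraph.completeGraph (Fin n)) with hH
  constructor
  · exact ⟨Sum.inl ⟨0, hnpos⟩, Sum.inr ⟨0, hnpos⟩, by simp⟩
  intro M N hM hN hdisj hunion
  classical
  -- halves
  set ML : Finset (Fin n) := Finset.univ.filter (fun a => Sum.inl a ∈ M) with hML
  set NL : Finset (Fin n) := Finset.univ.filter (fun a => Sum.inl a ∈ N) with hNL
  set MR : Finset (Fin n) := Finset.univ.filter (fun a => Sum.inr a ∈ M) with hMR
  set NR : Finset (Fin n) := Finset.univ.filter (fun a => Sum.inr a ∈ N) with hNR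
  have hmemL : ∀ a : Fin n, Sum.inl a ∈ M ∨ Sum.inl a ∈ N := by
    intro a
    have : (Sum.inl a : Fin n ⊕ Fin n) ∈ M ∪ N := hunion ▸ Set.mem_univ _
    exact this
  have hmemR : ∀ a : Fin n, Sum.inr a ∈ M ∨ Sum.inr a ∈ N := by
    intro a
    have : (Sum.inr a : Fin n ⊕ Fin n) ∈ M ∪ N := hunion ▸ Set.mem_univ _
    exact this
  have hdisj' : ∀ v, v ∈ M → v ∉ N := fun v hv hv' => hdisj.ne_of_mem hv hv' rfl
  have hcardL : ML.card + NL.card = n := by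
    rw [← Finset.card_union_of_disjoint]
    · have : ML ∪ NL = Finset.univ := by
        ext a
        simp only [hML, hNL, Finset.mem_union, Finset.mem_filter, Finset.mem_univ, true_and,
          iff_true]
        exact hmemL a
      rw [this, Finset.card_univ, Fintype.card_fin]
    · rw [Finset.disjoint_left]
      intro a ha ha'
      simp only [hML, hNL, Finset.mem_filter] at ha ha'
      exact hdisj' _ ha.2 ha'.2
  have hcardR : MR.card + NR.card = n := by
    rw [← Finset.card_union_of_disjoint]
    · have : MR ∪ NR = Finset.univ := by
        ext a
        simp only [hMR, hNR, Finset.mem_union, Finset.mem_filter, Finset.mem_univ, true_and,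
          iff_true]
        exact hmemR a
      rw [this, Finset.card_univ, Fintype.card_fin]
    · rw [Finset.disjoint_left]
      intro a ha ha'
      simp only [hMR, hNR, Finset.mem_filter] at ha ha'
      exact hdisj' _ ha.2 ha'.2
  by_cases hML1 : t - 1 ≤ ML.card
  · -- U1 with K on the left in M, unless N lives entirely on the left
    by_cases hNR1 : NR.Nonempty
    · obtain ⟨y0, hy0⟩ := hNR1
      simp only [hNR, Finset.mem_filter] at hy0
      obtain ⟨K0, hK0sub, hK0card⟩ := Finset.exists_subset_card_eq (s := ML) hML1
      refine Or.inl ⟨K0.image Sum.inl, ?_, clique_inl n (t-1) K0 hK0card, Sum.inr y0, hy0.2, ?_⟩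
      · intro v hv
        simp only [Finset.coe_image, Set.mem_image, Finset.mem_coe] at hv
        obtain ⟨a, ha, rfl⟩ := hv
        have := hK0sub ha
        simp only [hML, Finset.mem_filter] at this
        exact this.2
      · intro w hw
        simp only [Finset.mem_image] at hw
        obtain ⟨a, -, rfl⟩ := hw
        simp [hH]
    · -- all of the right side is in M
      have hMRall : MR = Finset.univ := by
        ext a
        simp only [hMR, Finset.mem_filter, Finset.mem_univ, true_and, iff_true]
        rcases hmemR a with h | h
        · exact h
        · exact absurd ⟨a, by simp [hNR, h]⟩ hNR1
      have hMR1 : t - 1 ≤ MR.card := by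
        rw [hMRall, Finset.card_univ, Fintype.card_fin]; omega
      obtain ⟨y, hy⟩ := hN
      obtain ⟨y0, rfl⟩ : ∃ y0, y = Sum.inl y0 := by
        cases y with
        | inl y0 => exact ⟨y0, rfl⟩
        | inr y0 => exact absurd ⟨y0, by simp [hNR, hy]⟩ hNR1
      obtain ⟨K0, hK0sub, hK0card⟩ := Finset.exists_subset_card_eq (s := MR) hMR1
      refine Or.inl ⟨K0.image Sum.inr, ?_, clique_inr n (t-1) K0 hK0card, Sum.inl y0, hy, ?_⟩
      · intro v hv
        simp only [Finset.coe_image, Set.mem_image, Finset.mem_coe] at hv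
        obtain ⟨a, ha, rfl⟩ := hv
        have := hK0sub ha
        simp only [hMR, Finset.mem_filter] at this
        exact this.2
      · intro w hw
        simp only [Finset.mem_image] at hw
        obtain ⟨a, -, rfl⟩ := hw
        simp [hH]
  · by_cases hMR1 : t - 1 ≤ MR.card
    · -- symmetric: K on the right in M
      by_cases hNL1 : NL.Nonempty
      · obtain ⟨y0, hy0⟩ := hNL1
        simp only [hNL, Finset.mem_filter] at hy0
        obtain ⟨K0, hK0sub, hK0card⟩ := Finset.exists_subset_card_eq (s := MR) hMR1
        refine Or.inl ⟨K0.image Sum.inr, ?_, clique_inr n (t-1) K0 hK0card, Sum.inl y0, hy0.2, ?_⟩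
        · intro v hv
          simp only [Finset.coe_image, Set.mem_image, Finset.mem_coe] at hv
          obtain ⟨a, ha, rfl⟩ := hv
          have := hK0sub ha
          simp only [hMR, Finset.mem_filter] at this
          exact this.2
        · intro w hw
          simp only [Finset.mem_image] at hw
          obtain ⟨a, -, rfl⟩ := hw
          simp [hH]
      · have hMLall : ML = Finset.univ := by
          ext a
          simp only [hML, Finset.mem_filter, Finset.mem_univ, true_and, iff_true]
          rcases hmemL a with h | h
          · exact h
          · exact absurd ⟨a, by simp [hNL, h]⟩ hNL1
        have : t - 1 ≤ ML.card := by
          rw [hMLall, Finset.card_univ, Fintype.card_fin]; omega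
        exact absurd this hML1
    · -- both ML, MR small: NL and NR both have ≥ t-1 elements; use U2
      push_neg at hML1 hMR1
      have hNL1 : t - 1 ≤ NL.card := by omega
      have hNR1 : t - 1 ≤ NR.card := by omega
      obtain ⟨x, hx⟩ := hM
      have ht2 : 1 ≤ t - 1 := by omega
      cases x with
      | inl x0 =>
        -- K on the right in N, y on the left in N
        obtain ⟨K0, hK0sub, hK0card⟩ := Finset.exists_subset_card_eq (s := NR) hNR1
        obtain ⟨y0, hy0⟩ : NL.Nonempty := Finset.card_pos.mp (by omega)
        simp only [hNL, Finset.mem_filter] at hy0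
        have hxy : x0 ≠ y0 := fun h => hdisj' _ hx (h ▸ hy0.2)
        refine Or.inr ⟨K0.image Sum.inr, ?_, clique_inr n (t-1) K0 hK0card,
          Sum.inl x0, hx, Sum.inl y0, hy0.2, by simp, by simp [hH, hxy], ?_, ?_⟩
        · intro v hv
          simp only [Finset.coe_image, Set.mem_image, Finset.mem_coe] at hv
          obtain ⟨a, ha, rfl⟩ := hv
          have := hK0sub ha
          simp only [hNR, Finset.mem_filter] at this
          exact this.2
        · intro w hw
          simp only [Finset.mem_image] at hw
          obtain ⟨a, -, rfl⟩ := hw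
          simp [hH]
        · intro w hw
          simp only [Finset.mem_image] at hw
          obtain ⟨a, -, rfl⟩ := hw
          simp [hH]
      | inr x0 =>
        obtain ⟨K0, hK0sub, hK0card⟩ := Finset.exists_subset_card_eq (s := NL) hNL1
        obtain ⟨y0, hy0⟩ : NR.Nonempty := Finset.card_pos.mp (by omega)
        simp only [hNR, Finset.mem_filter] at hy0
        have hxy : x0 ≠ y0 := fun h => hdisj' _ hx (h ▸ hy0.2)
        refine Or.inr ⟨K0.image Sum.inl, ?_, clique_inl n (t-1) K0 hK0card,
          Sum.inr x0, hx, Sum.inr y0, hy0.2, by simp, by simp [hH, hxy], ?_, ?_⟩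
        · intro v hv
          simp only [Finset.coe_image, Set.mem_image, Finset.mem_coe] at hv
          obtain ⟨a, ha, rfl⟩ := hv
          have := hK0sub ha
          simp only [hNL, Finset.mem_filter] at this
          exact this.2
        · intro w hw
          simp only [Finset.mem_image] at hw
          obtain ⟨a, -, rfl⟩ := hw
          simp [hH]
        · intro w hw
          simp only [Finset.mem_image] at hw
          obtain ⟨a, -, rfl⟩ := hw
          simp [hH]
end

section
/- Let t ≥ 3 be an integer, let G be a t-lollipop-free graph, and let S ⊆ V(G) be such that G[S] is tidy. Then S is a fair split in G. -/
/-- The `t`-lollipop: `K_t` together with a path on two vertices, joined by one edge. -/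
def lollipop (t : ℕ) : SimpleGraph (Fin t ⊕ Fin 2) :=
  SimpleGraph.fromRel (fun a b =>
    match a, b with
    | Sum.inl _, Sum.inl _ => True
    | Sum.inr _, Sum.inr _ => True
    | Sum.inl a, Sum.inr b => (a : ℕ) = 0 ∧ (b : ℕ) = 0
    | Sum.inr _, Sum.inl _ => False)

/-- `G` has no induced subgraph isomorphic to the `t`-lollipop. -/
def LollipopFree {V : Type*} (t : ℕ) (G : SimpleGraph V) : Prop :=
  ¬ Nonempty (lollipop t ↪g G)

/-- `S` is a split: any vertex outside `S` complete to `S` is adjacent to any vertex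
outside `S` mixed on `S`. -/
def IsSplit {V : Type*} (G : SimpleGraph V) (S : Set V) : Prop :=
  ∀ v ∉ S, ∀ u ∉ S, (∀ s ∈ S, G.Adj v s) →
    (∃ s ∈ S, G.Adj u s) → (∃ s ∈ S, ¬ G.Adj u s) → G.Adj u v

/-- `S` is fair: every vertex of `N(S)` is complete to `S` or has `t-1` pairwise
adjacent non-neighbors in `S`. -/
def IsFair {V : Type*} (t : ℕ) (G : SimpleGraph V) (S : Set V) : Prop :=
  ∀ v ∉ S, (∃ s ∈ S, G.Adj v s) →
    (∀ s ∈ S, G.Adj v s) ∨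
    ∃ K : Finset V, (K : Set V) ⊆ S ∧ (∀ w ∈ K, ¬ G.Adj v w) ∧ G.IsNClique (t - 1) K

/-!
Let `z ∉ S` be mixed on `S` and split `S` into the non-neighbours and the neighbours of `z`.
Of the two outcomes tidiness offers for this partition, the second (a `(t-1)`-clique `K` of
neighbours of `z` and an edge `xy` anticomplete to `K`, with `x` a non-neighbour and `y` a
neighbour of `z`) makes `K + z` the `K_t` of a lollipop with tail `y x`. So the first outcome
holds: a `(t-1)`-clique of non-neighbours of `z`, which is fairness, together with a
neighbour `y ∈ S` of `z` anticomplete to it. For a split, if `v` is complete to `S` and the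
mixed vertex `u` is not adjacent to `v`, this clique `K` for `z = u` gives the lollipop
`K + v` with tail `y u`.
-/

open Function

@[simp]
theorem lollipop_adj_inl_inl {t : ℕ} {i j : Fin t} :
    (lollipop t).Adj (.inl i) (.inl j) ↔ i ≠ j := by
  simp [lollipop]

@[simp]
theorem lollipop_adj_inr_inr {t : ℕ} {i j : Fin 2} :
    (lollipop t).Adj (.inr i) (.inr j) ↔ i ≠ j := by
  simp [lollipop]

@[simp]
theorem lollipop_adj_inl_inr {t : ℕ} {i : Fin t} {j : Fin 2} :
    (lollipop t).Adj (.inl i) (.inr j) ↔ (i : ℕ) = 0 ∧ j = 0 := by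
  simp [lollipop, Fin.val_eq_zero_iff]

@[simp]
theorem lollipop_adj_inr_inl {t : ℕ} {i : Fin t} {j : Fin 2} :
    (lollipop t).Adj (.inr j) (.inl i) ↔ (i : ℕ) = 0 ∧ j = 0 := by
  simp [lollipop, Fin.val_eq_zero_iff]

namespace SimpleGraph

variable {V : Type*} {G : SimpleGraph V}

theorem IsNClique.map_induce {S : Set V} {n : ℕ} {K : Finset S}
    (hK : (G.induce S).IsNClique n K) : G.IsNClique n (K.map (Embedding.subtype _)) :=
  hK.map.mono (map_comap_le _ _)

/-- `K + a` is the clique of the lollipop and `b c` its tail. -/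
theorem IsNClique.nonempty_lollipop_embedding {t : ℕ} (ht : t ≠ 0) {K : Finset V}
    (hK : G.IsNClique (t - 1) K) {a b c : V}
    (haK : ∀ w ∈ K, G.Adj a w) (hbK : ∀ w ∈ K, ¬ G.Adj b w) (hcK : ∀ w ∈ K, ¬ G.Adj c w)
    (hab : G.Adj a b) (hbc : G.Adj b c) (hac : ¬ G.Adj a c) (hne : a ≠ c) :
    Nonempty (lollipop t ↪g G) := by
  obtain ⟨n, rfl⟩ := Nat.exists_eq_succ_of_ne_zero ht
  let e : K ≃ Fin n := K.equivFinOfCardEq hK.card_eq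
  let k : Fin n → V := fun i => e.symm i
  have hk : ∀ i, k i ∈ K := fun i => (e.symm i).2
  have hk_inj : Injective k := Subtype.val_injective.comp e.symm.injective
  have hkk : ∀ i j, G.Adj (k i) (k j) ↔ i ≠ j := fun i j =>
    ⟨fun h hij => h.ne (congrArg k hij), fun hij => hK.isClique (hk i) (hk j) (hk_inj.ne hij)⟩
  have ha : ∀ i, G.Adj a (k i) := fun i => haK _ (hk i)
  have hb : ∀ i, ¬ G.Adj b (k i) := fun i => hbK _ (hk i)
  have hc : ∀ i, ¬ G.Adj c (k i) := fun i => hcK _ (hk i)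
  have hkb : ∀ i, k i ≠ b := fun i h => hc i (h ▸ hbc.symm)
  have hkc : ∀ i, k i ≠ c := fun i h => hac (h ▸ ha i)
  let f : Fin (n + 1) ⊕ Fin 2 → V := Sum.elim (Fin.cons a k) ![b, c]
  have hf_adj : ∀ x y, G.Adj (f x) (f y) ↔ (lollipop (n + 1)).Adj x y := by
    rintro (i | i) (j | j)
    · cases i using Fin.cases <;> cases j using Fin.cases <;>
        simp [f, ha, (ha _).symm, hkk, Fin.succ_ne_zero, (Fin.succ_ne_zero _).symm]
    · cases i using Fin.cases <;> fin_cases j <;>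
        simp [f, hab, hac, hb, hc, G.adj_comm (k _)]
    · cases j using Fin.cases <;> fin_cases i <;>
        simp [f, hab.symm, hac, hb, hc, G.adj_comm c]
    · fin_cases i <;> fin_cases j <;> simp [f, hbc, hbc.symm]
  have hf_inj : Injective f := by
    rintro (i | i) (j | j)
    · cases i using Fin.cases <;> cases j using Fin.cases <;>
        simp [f, (ha _).ne, (ha _).ne', hk_inj.eq_iff]
    · cases i using Fin.cases <;> fin_cases j <;> simp [f, hab.ne, hne, hkb, hkc]
    · cases j using Fin.cases <;> fin_cases i <;>
        simp [f, hab.ne', hne.symm, (hkb _).symm, (hkc _).symm]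
    · fin_cases i <;> fin_cases j <;> simp [f, hbc.ne, hbc.ne']
  exact ⟨⟨⟨f, hf_inj⟩, hf_adj _ _⟩⟩

end SimpleGraph

theorem Tidy.exists_anticomplete_clique {V : Type*} {G : SimpleGraph V} {t : ℕ} (ht : t ≠ 0)
    (hfree : LollipopFree t G) {S : Set V} (hS : Tidy t (G.induce S)) {z : V} (hz : z ∉ S)
    (hadj : ∃ s ∈ S, G.Adj z s) (hnadj : ∃ s ∈ S, ¬ G.Adj z s) :
    ∃ K : Finset V, (K : Set V) ⊆ S ∧ G.IsNClique (t - 1) K ∧ (∀ w ∈ K, ¬ G.Adj z w) ∧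
      ∃ y ∈ S, G.Adj z y ∧ ∀ w ∈ K, ¬ G.Adj y w := by
  obtain ⟨s, hs, hzs⟩ := hadj
  obtain ⟨s', hs', hzs'⟩ := hnadj
  rcases hS.2 {x | ¬ G.Adj z x} {x | G.Adj z x} ⟨⟨s', hs'⟩, hzs'⟩ ⟨⟨s, hs⟩, hzs⟩
      (Set.disjoint_left.2 fun _ h h' => h h')
      (Set.eq_univ_of_forall fun x => (em (G.Adj z x)).symm) with
    ⟨K, hKM, hK, y, hyN, hyK⟩ | ⟨K, hKN, hK, x, hxM, y, hyN, -, hxy, hxK, hyK⟩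
  · exact ⟨_, K.map_subtype_subset, hK.map_induce, Finset.forall_mem_map.2 fun _ hk => hKM hk,
      y, y.2, hyN, Finset.forall_mem_map.2 hyK⟩
  · exact (hfree (hK.map_induce.nonempty_lollipop_embedding ht
      (Finset.forall_mem_map.2 fun _ hk => hKN hk) (Finset.forall_mem_map.2 hyK)
      (Finset.forall_mem_map.2 hxK) hyN hxy.symm hxM (fun h => hz (h ▸ x.2)))).elim

/-- If `G` is `t`-lollipop-free (`t ≥ 3`) and `G[S]` is tidy, then `S` is a fair split. -/
theorem tidy_is_fair_split {V : Type*} (G : SimpleGraph V) (t : ℕ) (ht : 3 ≤ t)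
    (hfree : LollipopFree t G) (S : Set V) (hS : Tidy t (G.induce S)) :
    IsSplit G S ∧ IsFair t G S := by
  have ht0 : t ≠ 0 := by omega
  constructor
  · intro v _ u hu hvS hadj ⟨s, hs, hus⟩
    by_contra huv
    obtain ⟨K, hKS, hK, huK, y, hyS, huy, hyK⟩ :=
      hS.exists_anticomplete_clique ht0 hfree hu hadj ⟨s, hs, hus⟩
    exact hfree (hK.nonempty_lollipop_embedding ht0 (fun w hw => hvS w (hKS hw)) hyK huK
      (hvS y hyS) huy.symm (huv ∘ G.adj_symm) (fun h => hus (h ▸ hvS s hs)))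
  · intro v hv hadj
    by_cases hvS : ∀ s ∈ S, G.Adj v s
    · exact .inl hvS
    push Not at hvS
    obtain ⟨K, hKS, hK, hvK, -⟩ := hS.exists_anticomplete_clique ht0 hfree hv hadj hvS
    exact .inr ⟨K, hKS, hvK, hK⟩
end

section
/- If a graph G contains two disjoint cliques A and B of sizes 4 and 3 respectively with exactly one edge between A and B, then G contains an induced bowtie or G has an edge not contained in any triangle. -/
/-- The bowtie: two triangles sharing one vertex. Vertex `0` is the shared vertex,
and `{1,2}`, `{3,4}` are the other two edges. -/
def bowtie : SimpleGraph (Fin 5) :=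
  SimpleGraph.fromRel (fun a b => a = 0 ∨ (a = 1 ∧ b = 2) ∨ (a = 3 ∧ b = 4))

set_option linter.unreachableTactic false in
set_option linter.unusedTactic false in
lemma bowtie_emb {V : Type*} (G : SimpleGraph V) (v0 v1 v2 v3 v4 : V)
    (e01 : G.Adj v0 v1) (e02 : G.Adj v0 v2) (e12 : G.Adj v1 v2)
    (e03 : G.Adj v0 v3) (e04 : G.Adj v0 v4) (e34 : G.Adj v3 v4)
    (n13 : ¬G.Adj v1 v3) (n14 : ¬G.Adj v1 v4) (n23 : ¬G.Adj v2 v3) (n24 : ¬G.Adj v2 v4)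
    (h13 : v1 ≠ v3) (h14 : v1 ≠ v4) (h23 : v2 ≠ v3) (h24 : v2 ≠ v4) :
    Nonempty (bowtie ↪g G) := by
  have d01 := e01.ne; have d02 := e02.ne; have d12 := e12.ne
  have d03 := e03.ne; have d04 := e04.ne; have d34 := e34.ne
  refine ⟨⟨⟨![v0,v1,v2,v3,v4], ?_⟩, ?_⟩⟩
  · intro i j h
    fin_cases i <;> fin_cases j <;> simp_all <;> (try exact absurd h.symm (by assumption)) <;> exact absurd h (by assumption)
  · intro i j
    change G.Adj (![v0,v1,v2,v3,v4] i) (![v0,v1,v2,v3,v4] j) ↔ bowtie.Adj i j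
    fin_cases i <;> fin_cases j <;>
      simp [bowtie, SimpleGraph.fromRel_adj, e01, e02, e12, e03, e04, e34,
        e01.symm, e02.symm, e12.symm, e03.symm, e04.symm, e34.symm,
        n13, n14, n23, n24, fun h => n13 (G.adj_symm h), fun h => n14 (G.adj_symm h),
        fun h => n23 (G.adj_symm h), fun h => n24 (G.adj_symm h),
        G.irrefl, d01, d02, d12, d03, d04, d34, h13, h14, h23, h24] <;>
      first
        | exact fun h => n13 h.symm
        | exact fun h => n14 h.symm
        | exact fun h => n23 h.symm
        | exact fun h => n24 h.symm

/-- If `G` has disjoint cliques `A`, `B` of sizes 4 and 3 with exactly one edge between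
them, then `G` has an induced bowtie or an edge in no triangle. -/
theorem bowtie_or_triangle_free_edge_of_cliques_one_edge {V : Type*}
    (G : SimpleGraph V) (A B : Finset V) (hdisj : Disjoint A B)
    (hA : G.IsNClique 4 A) (hB : G.IsNClique 3 B)
    (hone : ∃! p : V × V, p.1 ∈ A ∧ p.2 ∈ B ∧ G.Adj p.1 p.2) :
    Nonempty (bowtie ↪g G) ∨
      ∃ u v, G.Adj u v ∧ ∀ w, ¬ (G.Adj u w ∧ G.Adj v w) := by
  classical
  obtain ⟨⟨a, b⟩, ⟨haA, hbB, hab⟩, huniq⟩ := hone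
  have key : ∀ u v, u ∈ A → v ∈ B → G.Adj u v → u = a ∧ v = b := by
    intro u v hu hv h
    have := huniq (u, v) ⟨hu, hv, h⟩
    exact ⟨congrArg Prod.fst this, congrArg Prod.snd this⟩
  have nAB : ∀ u v, u ∈ A → v ∈ B → (u ≠ a ∨ v ≠ b) → ¬G.Adj u v := by
    intro u v hu hv hne h
    rcases hne with hne | hne <;> [exact hne (key u v hu hv h).1; exact hne (key u v hu hv h).2]
  have dAB : ∀ u, u ∈ A → u ∉ B := fun u hu => Finset.disjoint_left.mp hdisj hu
  have adjA : ∀ u v, u ∈ A → v ∈ A → u ≠ v → G.Adj u v := by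
    intro u v hu hv hne; exact hA.1 (by simpa using hu) (by simpa using hv) hne
  have adjB : ∀ u v, u ∈ B → v ∈ B → u ≠ v → G.Adj u v := by
    intro u v hu hv hne; exact hB.1 (by simpa using hu) (by simpa using hv) hne
  by_cases hw : ∃ w, G.Adj a w ∧ G.Adj b w
  swap
  · right
    exact ⟨a, b, hab, fun w hw' => hw ⟨w, hw'⟩⟩
  obtain ⟨w, hwa, hwb⟩ := hw
  left
  have hwA : w ∉ A := fun h => hwa.ne (key w b h hbB hwb.symm).1.symm
  have hwB : w ∉ B := fun h => hwb.ne (key a w haA h hwa).2.symm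
  -- extract x, y, z from A \ {a}
  have hA3 : (A.erase a).card = 3 := by
    rw [Finset.card_erase_of_mem haA, hA.card_eq]
  obtain ⟨x, y, z, hxy, hxz, hyz, hAe⟩ := Finset.card_eq_three.mp hA3
  have hx : x ∈ A.erase a := by rw [hAe]; simp
  have hy : y ∈ A.erase a := by rw [hAe]; simp
  have hz : z ∈ A.erase a := by rw [hAe]; simp
  have hxA := Finset.mem_of_mem_erase hx
  have hyA := Finset.mem_of_mem_erase hy
  have hzA := Finset.mem_of_mem_erase hz
  have hxa := Finset.ne_of_mem_erase hx
  have hya := Finset.ne_of_mem_erase hy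
  have hza := Finset.ne_of_mem_erase hz
  -- extract c, d from B \ {b}
  have hB2 : (B.erase b).card = 2 := by
    rw [Finset.card_erase_of_mem hbB, hB.card_eq]
  obtain ⟨c, d, hcd, hBe⟩ := Finset.card_eq_two.mp hB2
  have hc : c ∈ B.erase b := by rw [hBe]; simp
  have hd : d ∈ B.erase b := by rw [hBe]; simp
  have hcB := Finset.mem_of_mem_erase hc
  have hdB := Finset.mem_of_mem_erase hd
  have hcb := Finset.ne_of_mem_erase hc
  have hdb := Finset.ne_of_mem_erase hd
  -- bowtie with shared vertex a, using p q ∈ A \ {a} not adjacent to w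
  have atA : ∀ p q, p ∈ A → q ∈ A → p ≠ a → q ≠ a → p ≠ q →
      ¬G.Adj w p → ¬G.Adj w q → Nonempty (bowtie ↪g G) := by
    intro p q hp hq hpa hqa hpq np nq
    exact bowtie_emb G a p q b w
      (adjA a p haA hp (Ne.symm hpa)) (adjA a q haA hq (Ne.symm hqa)) (adjA p q hp hq hpq)
      hab hwa hwb
      (nAB p b hp hbB (Or.inl hpa)) (fun h => np h.symm)
      (nAB q b hq hbB (Or.inl hqa)) (fun h => nq h.symm)
      (fun h => dAB p hp (h ▸ hbB)) (fun h => hwA (h ▸ hp))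
      (fun h => dAB q hq (h ▸ hbB)) (fun h => hwA (h ▸ hq))
  -- case where w is adjacent to two vertices p q ∈ A \ {a}
  have twoAdj : ∀ p q, p ∈ A → q ∈ A → p ≠ a → q ≠ a → p ≠ q →
      G.Adj w p → G.Adj w q → Nonempty (bowtie ↪g G) := by
    intro p q hp hq hpa hqa hpq np nq
    -- bowtie with shared vertex w, using e ∈ B \ {b} adjacent to w
    have atW : ∀ e, e ∈ B → e ≠ b → G.Adj w e → Nonempty (bowtie ↪g G) := by
      intro e heB heb hwe
      exact bowtie_emb G w p q b e np nq (adjA p q hp hq hpq) hwb.symm hwe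
        (adjB b e hbB heB (Ne.symm heb))
        (nAB p b hp hbB (Or.inl hpa)) (nAB p e hp heB (Or.inl hpa))
        (nAB q b hq hbB (Or.inl hqa)) (nAB q e hq heB (Or.inl hqa))
        (fun h => dAB p hp (h ▸ hbB)) (fun h => dAB p hp (h ▸ heB))
        (fun h => dAB q hq (h ▸ hbB)) (fun h => dAB q hq (h ▸ heB))
    by_cases hwc : G.Adj w c
    · exact atW c hcB hcb hwc
    by_cases hwd : G.Adj w d
    · exact atW d hdB hdb hwd
    -- bowtie with shared vertex b
    exact bowtie_emb G b c d a w
      (adjB b c hbB hcB (Ne.symm hcb)) (adjB b d hbB hdB (Ne.symm hdb))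
      (adjB c d hcB hdB hcd) hab.symm hwb hwa
      (fun h => nAB a c haA hcB (Or.inr hcb) h.symm)
      (fun h => hwc h.symm)
      (fun h => nAB a d haA hdB (Or.inr hdb) h.symm)
      (fun h => hwd h.symm)
      (fun h => dAB a haA (h ▸ hcB))
      (fun h => hwB (h ▸ hcB))
      (fun h => dAB a haA (h ▸ hdB))
      (fun h => hwB (h ▸ hdB))
  by_cases hwx : G.Adj w x <;> by_cases hwy : G.Adj w y <;> by_cases hwz : G.Adj w z
  · exact twoAdj x y hxA hyA hxa hya hxy hwx hwy
  · exact twoAdj x y hxA hyA hxa hya hxy hwx hwy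
  · exact twoAdj x z hxA hzA hxa hza hxz hwx hwz
  · exact atA y z hyA hzA hya hza hyz hwy hwz
  · exact twoAdj y z hyA hzA hya hza hyz hwy hwz
  · exact atA x z hxA hzA hxa hza hxz hwx hwz
  · exact atA x y hxA hyA hxa hya hxy hwx hwy
  · exact atA x y hxA hyA hxa hya hxy hwx hwy
end

section
/- If a graph G contains two disjoint anti-complete cliques A and B of sizes 4 and 3 respectively, and a vertex v with at least one neighbor in each of A and B, then G contains an induced bowtie or G has an edge not contained in any triangle. -/
/-!
Suppose every edge lies in a triangle and there is no induced bowtie. Two configurations are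
centres of bowties: a vertex with two neighbours in `A` and two in `B`, and a vertex `c` of a
clique `K` in a triangle `c r s` such that `r`, `s` both miss two further vertices of `K`.
Hence a vertex with two neighbours in `B` has none in `A`: completing its edge to `A` to a
triangle, the third vertex sees three vertices of `A`, and either it or the vertex itself is
a centre. Otherwise `v` has a single neighbour `b₀` in `B`. Completing `v b₀` and `v a₀` to
triangles `v b₀ y` and `v a₀ x`, the vertex `y` has two neighbours in `B`, hence none in `A`,
and according as `x ~ y`, `x ~ b₀` or neither, a bowtie is centred at `x`, `b₀` or `v`.
-/

open Finset

theorem Finset.exists_ne_ne_of_two_lt_card {α : Type*} [DecidableEq α] {s : Finset α}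
    (hs : 2 < #s) (a : α) : ∃ p ∈ s, ∃ q ∈ s, p ≠ q ∧ p ≠ a ∧ q ≠ a := by
  have herase := pred_card_le_card_erase (s := s) (a := a)
  obtain ⟨p, hp, q, hq, hpq⟩ := one_lt_card.1 (by omega : 1 < #(s.erase a))
  rw [mem_erase] at hp hq
  exact ⟨p, hp.2, q, hq.2, hpq, hp.1, hq.1⟩

namespace SimpleGraph

variable {V : Type*} {G : SimpleGraph V}

theorem nonempty_bowtie_embedding {c p q r s : V}
    (hcp : G.Adj c p) (hcq : G.Adj c q) (hcr : G.Adj c r) (hcs : G.Adj c s)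
    (hpq : G.Adj p q) (hrs : G.Adj r s)
    (hpr : ¬ G.Adj p r) (hps : ¬ G.Adj p s) (hqr : ¬ G.Adj q r) (hqs : ¬ G.Adj q s) :
    Nonempty (bowtie ↪g G) := by
  have hpr' : p ≠ r := by rintro rfl; exact hps hrs
  have hps' : p ≠ s := by rintro rfl; exact hpr hrs.symm
  have hqr' : q ≠ r := by rintro rfl; exact hqs hrs
  have hqs' : q ≠ s := by rintro rfl; exact hqr hrs.symm
  have := hcp.ne; have := hcq.ne; have := hcr.ne; have := hcs.ne
  have := hpq.ne; have := hrs.ne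
  refine ⟨⟨⟨![c, p, q, r, s], fun i j h => ?_⟩, fun {i j} => ?_⟩⟩
  · fin_cases i <;> fin_cases j <;> simp_all
  · fin_cases i <;> fin_cases j <;>
      simp [bowtie, SimpleGraph.fromRel, G.adj_comm] <;> tauto

variable [DecidableRel G.Adj] {A B K : Finset V}

theorem eq_of_adj_of_two_le_card_filter_adj (hfree : ¬ Nonempty (bowtie ↪g G))
    (hA : G.IsClique (A : Set V)) (hB : G.IsClique (B : Set V))
    (hanti : ∀ a ∈ A, ∀ b ∈ B, ¬ G.Adj a b) {w a : V}
    (hwB : 2 ≤ #{u ∈ B | G.Adj w u}) (ha : a ∈ A) (hwa : G.Adj w a) :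
    ∀ u ∈ A, G.Adj w u → u = a := by
  intro u hu hwu
  by_contra hne
  obtain ⟨b, hb, b', hb', hbb'⟩ := one_lt_card.1 hwB
  rw [mem_filter] at hb hb'
  exact hfree (nonempty_bowtie_embedding hwu hwa hb.2 hb'.2 (hA hu ha hne) (hB hb.1 hb'.1 hbb')
    (hanti _ hu _ hb.1) (hanti _ hu _ hb'.1) (hanti _ ha _ hb.1) (hanti _ ha _ hb'.1))

/-- Two vertices of `K` missed by `s` would form a bowtie with the triangle `c r s`. -/
theorem card_le_card_filter_adj_add_one (hfree : ¬ Nonempty (bowtie ↪g G))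
    (hK : G.IsClique (K : Set V)) {c r s : V} (hc : c ∈ K)
    (hcr : G.Adj c r) (hcs : G.Adj c s) (hrs : G.Adj r s) (hr : ∀ u ∈ K, G.Adj r u → u = c) :
    #K ≤ #{u ∈ K | G.Adj s u} + 1 := by
  by_contra! hlt
  have hsplit := card_filter_add_card_filter_not (s := K) (fun u => G.Adj s u)
  obtain ⟨p, hp, q, hq, hpq⟩ := one_lt_card.1 (by omega : 1 < #{u ∈ K | ¬ G.Adj s u})
  rw [mem_filter] at hp hq
  have hpc : p ≠ c := by rintro rfl; exact hp.2 hcs.symm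
  have hqc : q ≠ c := by rintro rfl; exact hq.2 hcs.symm
  exact hfree (nonempty_bowtie_embedding (hK hc hp.1 hpc.symm) (hK hc hq.1 hqc.symm) hcr hcs
    (hK hp.1 hq.1 hpq) hrs (fun h => hpc (hr p hp.1 h.symm)) (fun h => hp.2 h.symm)
    (fun h => hqc (hr q hq.1 h.symm)) (fun h => hq.2 h.symm))

theorem not_adj_of_two_le_card_filter_adj (hfree : ¬ Nonempty (bowtie ↪g G))
    (htri : ∀ u w, G.Adj u w → ∃ z, G.Adj u z ∧ G.Adj w z)
    (hA : G.IsClique (A : Set V)) (hA4 : 4 ≤ #A) (hB : G.IsClique (B : Set V))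
    (hanti : ∀ a ∈ A, ∀ b ∈ B, ¬ G.Adj a b) {v a : V}
    (hvB : 2 ≤ #{u ∈ B | G.Adj v u}) (ha : a ∈ A) : ¬ G.Adj v a := by
  classical
  intro hva
  have hvA := eq_of_adj_of_two_le_card_filter_adj hfree hA hB hanti hvB ha hva
  obtain ⟨x, hvx, hax⟩ := htri v a hva
  have hxA := card_le_card_filter_adj_add_one hfree hA ha hva.symm hax hvx hvA
  obtain ⟨b, hb, b', hb', hbb'⟩ := one_lt_card.1 hvB
  rw [mem_filter] at hb hb'
  by_cases hxb : G.Adj x b ∨ G.Adj x b'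
  · obtain ⟨b₀, hb₀, hvb₀, hxb₀⟩ : ∃ b₀ ∈ B, G.Adj v b₀ ∧ G.Adj x b₀ := by
      rcases hxb with h | h
      exacts [⟨b, hb.1, hb.2, h⟩, ⟨b', hb'.1, hb'.2, h⟩]
    obtain ⟨p, hp, q, hq, hpq, hpa, hqa⟩ :=
      exists_ne_ne_of_two_lt_card (by omega : 2 < #{u ∈ A | G.Adj x u}) a
    rw [mem_filter] at hp hq
    exact hfree (nonempty_bowtie_embedding hp.2 hq.2 hvx.symm hxb₀ (hA hp.1 hq.1 hpq) hvb₀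
      (fun h => hpa (hvA p hp.1 h.symm)) (hanti _ hp.1 _ hb₀)
      (fun h => hqa (hvA q hq.1 h.symm)) (hanti _ hq.1 _ hb₀))
  · push Not at hxb
    exact hfree (nonempty_bowtie_embedding hvx hva hb.2 hb'.2 hax.symm (hB hb.1 hb'.1 hbb')
      hxb.1 hxb.2 (hanti _ ha _ hb.1) (hanti _ ha _ hb'.1))

theorem false_of_adj_of_forall_adj_eq (hfree : ¬ Nonempty (bowtie ↪g G))
    (htri : ∀ u w, G.Adj u w → ∃ z, G.Adj u z ∧ G.Adj w z)
    (hA : G.IsClique (A : Set V)) (hA4 : 4 ≤ #A) (hB : G.IsClique (B : Set V)) (hB3 : 3 ≤ #B)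
    (hanti : ∀ a ∈ A, ∀ b ∈ B, ¬ G.Adj a b) {v a₀ b₀ : V}
    (ha₀ : a₀ ∈ A) (hb₀ : b₀ ∈ B) (hva₀ : G.Adj v a₀) (hvb₀ : G.Adj v b₀)
    (hvB : ∀ u ∈ B, G.Adj v u → u = b₀) : False := by
  classical
  obtain ⟨y, hvy, hb₀y⟩ := htri v b₀ hvb₀
  have hyB := card_le_card_filter_adj_add_one hfree hB hb₀ hvb₀.symm hb₀y hvy hvB
  have hyA : ∀ a ∈ A, ¬ G.Adj y a := fun a ha =>
    not_adj_of_two_le_card_filter_adj hfree htri hA hA4 hB hanti (by omega) ha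
  have hvA : ∀ u ∈ A, G.Adj v u → u = a₀ := by
    intro u hu hvu
    by_contra hne
    exact hfree (nonempty_bowtie_embedding hvu hva₀ hvy hvb₀ (hA hu ha₀ hne) hb₀y.symm
      (hyA u hu ·.symm) (hanti _ hu _ hb₀) (hyA a₀ ha₀ ·.symm) (hanti _ ha₀ _ hb₀))
  obtain ⟨x, hvx, ha₀x⟩ := htri v a₀ hva₀
  have hxA := card_le_card_filter_adj_add_one hfree hA ha₀ hva₀.symm ha₀x hvx hvA
  by_cases hxy : G.Adj x y
  · obtain ⟨p, hp, q, hq, hpq, hpa, hqa⟩ :=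
      exists_ne_ne_of_two_lt_card (by omega : 2 < #{u ∈ A | G.Adj x u}) a₀
    rw [mem_filter] at hp hq
    exact hfree (nonempty_bowtie_embedding hp.2 hq.2 hvx.symm hxy (hA hp.1 hq.1 hpq) hvy
      (fun h => hpa (hvA p hp.1 h.symm)) (hyA p hp.1 ·.symm)
      (fun h => hqa (hvA q hq.1 h.symm)) (hyA q hq.1 ·.symm))
  by_cases hxb₀ : G.Adj x b₀
  · have hxB := eq_of_adj_of_two_le_card_filter_adj hfree hB hA
      (fun b hb a ha h => hanti a ha b hb h.symm) (by omega) hb₀ hxb₀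
    obtain ⟨p, hp, q, hq, hpq, hpb, hqb⟩ := exists_ne_ne_of_two_lt_card (by omega : 2 < #B) b₀
    exact hfree (nonempty_bowtie_embedding (hB hb₀ hp hpb.symm) (hB hb₀ hq hqb.symm)
      hvb₀.symm hxb₀.symm (hB hp hq hpq) hvx
      (fun h => hpb (hvB p hp h.symm)) (fun h => hpb (hxB p hp h.symm))
      (fun h => hqb (hvB q hq h.symm)) (fun h => hqb (hxB q hq h.symm)))
  exact hfree (nonempty_bowtie_embedding hvx hva₀ hvy hvb₀ ha₀x.symm hb₀y.symm hxy hxb₀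
    (hyA a₀ ha₀ ·.symm) (hanti _ ha₀ _ hb₀))

end SimpleGraph

theorem bowtie_or_triangle_free_edge_of_anticomplete_cliques_general {V : Type*}
    (G : SimpleGraph V) (A B : Finset V)
    (hA : G.IsNClique 4 A) (hB : G.IsNClique 3 B)
    (hanti : ∀ a ∈ A, ∀ b ∈ B, ¬ G.Adj a b)
    (v : V) (hvA : ∃ a ∈ A, G.Adj v a) (hvB : ∃ b ∈ B, G.Adj v b) :
    Nonempty (bowtie ↪g G) ∨
      ∃ u w, G.Adj u w ∧ ∀ x, ¬ (G.Adj u x ∧ G.Adj w x) := by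
  classical
  by_contra! ⟨hfree, htri⟩
  rw [← not_nonempty_iff] at hfree
  obtain ⟨a, ha, hva⟩ := hvA
  obtain ⟨b, hb, hvb⟩ := hvB
  by_cases hvB2 : 2 ≤ #{u ∈ B | G.Adj v u}
  · exact SimpleGraph.not_adj_of_two_le_card_filter_adj hfree htri hA.1 hA.2.ge hB.1 hanti hvB2
      ha hva
  refine SimpleGraph.false_of_adj_of_forall_adj_eq hfree htri hA.1 hA.2.ge hB.1 hB.2.ge hanti
    ha hb hva hvb fun u hu hvu => by_contra fun hne => hvB2 ?_
  exact one_lt_card.2 ⟨u, by simp [hu, hvu], b, by simp [hb, hvb], hne⟩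

/-- If `G` has disjoint anti-complete cliques `A`, `B` of sizes 4 and 3, and a vertex
`v` with a neighbor in each, then `G` has an induced bowtie or an edge in no triangle. -/
theorem bowtie_or_triangle_free_edge_of_anticomplete_cliques {V : Type*}
    (G : SimpleGraph V) (A B : Finset V) (hdisj : Disjoint A B)
    (hA : G.IsNClique 4 A) (hB : G.IsNClique 3 B)
    (hanti : ∀ a ∈ A, ∀ b ∈ B, ¬ G.Adj a b)
    (v : V) (hvA : ∃ a ∈ A, G.Adj v a) (hvB : ∃ b ∈ B, G.Adj v b) :
    Nonempty (bowtie ↪g G) ∨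
      ∃ u w, G.Adj u w ∧ ∀ x, ¬ (G.Adj u x ∧ G.Adj w x) :=
  bowtie_or_triangle_free_edge_of_anticomplete_cliques_general G A B hA hB hanti v hvA hvB
end

section
/- Let G be a graph with no homogeneous set and let X be a proper subset of V(G) that is not a stable (independent) set. Then there exist vertices x1, x2 ∈ X and y ∈ V(G) \ X such that x1–x2–y is an induced path (x1x2, x2y ∈ E(G), x1y ∉ E(G)). -/
/-!
Suppose no such path exists. Then a vertex outside `X` adjacent to one end of an edge inside `X`
is adjacent to the other end as well, so its adjacency is constant on every connected component
of `G[X]`; a vertex of `X` outside such a component has no neighbour in it. Hence the component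
of `G[X]` containing an edge is a homogeneous set, and it is proper since it lies in `X`.
-/

/-- A homogeneous set: `1 < |X| < |V(G)|` and every outside vertex is complete
or anti-complete to `X`. -/
def IsHomogeneousSet {V : Type*} (G : SimpleGraph V) (X : Set V) : Prop :=
  X.Nontrivial ∧ X ≠ Set.univ ∧
    ∀ v ∉ X, (∀ x ∈ X, G.Adj v x) ∨ (∀ x ∈ X, ¬ G.Adj v x)

namespace SimpleGraph

variable {V : Type*} {G : SimpleGraph V}

lemma Reachable.iff_of_adj {P : V → Prop} (hP : ∀ ⦃a b⦄, G.Adj a b → (P a ↔ P b))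
    {u v : V} (h : G.Reachable u v) : P u ↔ P v := by
  obtain ⟨p⟩ := h
  induction p with
  | nil => rfl
  | cons hadj _ ih => exact (hP hadj).trans ih

variable {X : Set V}

lemma adj_iff_of_reachable_induce {v : V}
    (hv : ∀ a ∈ X, ∀ b ∈ X, G.Adj a b → G.Adj b v → G.Adj a v) {a b : X}
    (h : (G.induce X).Reachable a b) : G.Adj v a ↔ G.Adj v b :=
  h.iff_of_adj (P := fun c : X => G.Adj v c) fun c d hcd =>
    ⟨fun hc => (hv d d.2 c c.2 hcd.symm hc.symm).symm,
      fun hd => (hv c c.2 d d.2 hcd hd.symm).symm⟩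

theorem isHomogeneousSet_image_connectedComponent_supp (hX : X ≠ Set.univ) {x y : X}
    (hxy : G.Adj x y)
    (hclosed : ∀ a ∈ X, ∀ b ∈ X, ∀ v ∉ X, G.Adj a b → G.Adj b v → G.Adj a v) :
    IsHomogeneousSet G (Subtype.val '' ((G.induce X).connectedComponentMk x).supp) := by
  set C := Subtype.val '' ((G.induce X).connectedComponentMk x).supp
  have mem_C {a : X} : (a : V) ∈ C ↔ (G.induce X).Reachable x a := by
    simp [C, ConnectedComponent.eq, reachable_comm]
  have hCX : C ⊆ X := Subtype.coe_image_subset X _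
  refine ⟨⟨x, mem_C.2 .rfl, y, mem_C.2 (Adj.reachable (G := G.induce X) hxy), hxy.ne⟩,
    fun hC => hX (Set.univ_subset_iff.1 (hC ▸ hCX)), ?_⟩
  intro v hvC
  by_cases hvX : v ∈ X
  · refine Or.inr ?_
    rintro _ ⟨a, ha, rfl⟩ hva
    have hav : (G.induce X).Adj a ⟨v, hvX⟩ := hva.symm
    exact hvC (mem_C.2 ((mem_C.1 ⟨a, ha, rfl⟩).trans hav.reachable))
  · have hv {a : X} (ha : (a : V) ∈ C) : G.Adj v a ↔ G.Adj v x :=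
      (adj_iff_of_reachable_induce (fun a ha b hb => hclosed a ha b hb v hvX) (mem_C.1 ha)).symm
    by_cases hvx : G.Adj v x
    · left
      rintro _ ⟨a, ha, rfl⟩
      exact (hv ⟨a, ha, rfl⟩).2 hvx
    · right
      rintro _ ⟨a, ha, rfl⟩
      exact mt (hv ⟨a, ha, rfl⟩).1 hvx

end SimpleGraph

/-- In a graph with no homogeneous set, every proper non-stable vertex subset `X`
yields an induced path `x₁ – x₂ – y` with `x₁, x₂ ∈ X` and `y ∉ X`. -/
theorem exists_induced_P3_leaving_set {V : Type*} (G : SimpleGraph V)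
    (hhom : ¬ ∃ X : Set V, IsHomogeneousSet G X)
    (X : Set V) (hX : X ≠ Set.univ)
    (hnotstable : ∃ x ∈ X, ∃ y ∈ X, G.Adj x y) :
    ∃ x1 ∈ X, ∃ x2 ∈ X, ∃ y ∉ X, x1 ≠ y ∧
      G.Adj x1 x2 ∧ G.Adj x2 y ∧ ¬ G.Adj x1 y := by
  by_contra hcon
  push Not at hcon
  obtain ⟨x, hx, y, hy, hxy⟩ := hnotstable
  exact hhom ⟨_, SimpleGraph.isHomogeneousSet_image_connectedComponent_supp (x := ⟨x, hx⟩)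
    (y := ⟨y, hy⟩) hX hxy fun a ha b hb v hv =>
      hcon a ha b hb v hv (ne_of_mem_of_not_mem ha hv)⟩
end

section
/- No pentagram spider is a willow; that is, if G is a 10-vertex graph having a perfect matching M such that G with the edges of M removed has a connected component isomorphic to K_5, then for no positive integer n is G an n-willow. -/
/-- A directed path (walk) of length `ℓ` from `u` to `v` along the relation `r`. -/
def DirPath {T : Type*} (r : T → T → Prop) (u v : T) (ℓ : ℕ) : Prop :=
  ∃ p : ℕ → T, p 0 = u ∧ p ℓ = v ∧ ∀ i < ℓ, r (p i) (p (i + 1))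

/-- `r` is an orientation of a tree: it is asymmetric and its underlying
(symmetrized) simple graph is a tree. -/
structure IsOrientedTree {T : Type*} (r : T → T → Prop) : Prop where
  asymm : ∀ u v, r u v → ¬ r v u
  tree : (SimpleGraph.fromRel r).IsTree

/-- `G` is an `n`-willow defined by the oriented tree `r` on `T`, via the injection
`f` of its vertices into `T`: two distinct vertices are adjacent iff `T` has a
directed path between them (in either direction) of length not a multiple of `n`. -/
def IsNWillowOn {V T : Type*} (n : ℕ) (G : SimpleGraph V) (r : T → T → Prop)
    (f : V → T) : Prop :=
  IsOrientedTree r ∧ Function.Injective f ∧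
    ∀ u v : V, u ≠ v →
      (G.Adj u v ↔ ∃ ℓ, ¬ (n ∣ ℓ) ∧ (DirPath r (f u) (f v) ℓ ∨ DirPath r (f v) (f u) ℓ))

/-- `G` is an `n`-willow. -/
def IsNWillow {V : Type*} (n : ℕ) (G : SimpleGraph V) : Prop :=
  ∃ (T : Type) (r : T → T → Prop) (f : V → T), IsNWillowOn n G r f

/-- `G` is a willow: an `n`-willow for some positive integer `n`. -/
def IsWillow {V : Type*} (G : SimpleGraph V) : Prop :=
  ∃ n : ℕ, 0 < n ∧ IsNWillow n G

/-! ### Auxiliary lemmas -/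

section Aux

variable {T : Type*} {r : T → T → Prop}

lemma dirPath_eq_of_zero {u v : T} (h : DirPath r u v 0) : u = v := by
  obtain ⟨p, h0, hl, -⟩ := h
  rw [← h0, hl]

lemma dirPath_trans {u v w : T} {a b : ℕ} (h1 : DirPath r u v a) (h2 : DirPath r v w b) :
    DirPath r u w (a + b) := by
  obtain ⟨p, hp0, hpa, hps⟩ := h1
  obtain ⟨q, hq0, hqb, hqs⟩ := h2
  refine ⟨fun i => if i < a then p i else q (i - a), ?_, ?_, ?_⟩
  · by_cases h : 0 < a
    · simpa [h] using hp0
    · simp only [Nat.not_lt, Nat.le_zero] at h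
      subst h
      simpa using hq0.trans (hpa.symm.trans hp0)
  · have : ¬ a + b < a := by omega
    simpa [this] using hqb
  · intro i hi
    by_cases h : i < a
    · by_cases h' : i + 1 < a
      · simpa [h, h'] using hps i h
      · have hia : i + 1 = a := by omega
        have : q (i + 1 - a) = p (i + 1) := by
          rw [hia]; simp [hq0, ← hpa]
        simp only [if_pos h, if_neg h']
        rw [this]
        exact hps i h
    · have h' : ¬ i + 1 < a := by omega
      simp only [if_neg h, if_neg h']
      have : i + 1 - a = (i - a) + 1 := by omega
      rw [this]
      exact hqs (i - a) (by omega)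

/-- Turn a step function into a walk in a simple graph. -/
def funWalk (G : SimpleGraph T) (p : ℕ → T) :
    ∀ ℓ : ℕ, (∀ i < ℓ, G.Adj (p i) (p (i + 1))) → G.Walk (p 0) (p ℓ)
  | 0, _ => SimpleGraph.Walk.nil
  | (ℓ + 1), h =>
      (funWalk G p ℓ (fun i hi => h i (by omega))).concat (h ℓ (by omega))

lemma funWalk_length (G : SimpleGraph T) (p : ℕ → T) :
    ∀ (ℓ : ℕ) (h : ∀ i < ℓ, G.Adj (p i) (p (i + 1))), (funWalk G p ℓ h).length = ℓ
  | 0, _ => rfl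
  | (ℓ + 1), h => by
      rw [funWalk, SimpleGraph.Walk.length_concat, funWalk_length G p ℓ]

lemma funWalk_support (G : SimpleGraph T) (p : ℕ → T) :
    ∀ (ℓ : ℕ) (h : ∀ i < ℓ, G.Adj (p i) (p (i + 1))),
      (funWalk G p ℓ h).support = (List.range (ℓ + 1)).map p
  | 0, _ => by simp [funWalk, List.range_succ]
  | (ℓ + 1), h => by
      rw [funWalk, SimpleGraph.Walk.support_concat, funWalk_support G p ℓ,
        List.range_succ]
      simp [List.range_succ]

/-- In an oriented tree there is no nontrivial closed directed walk. -/
lemma no_dicycle (hOT : IsOrientedTree r) : ∀ (ℓ : ℕ) (u : T), DirPath r u u ℓ → ℓ = 0 := by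
  intro ℓ
  induction ℓ using Nat.strong_induction_on with
  | _ ℓ IH =>
  intro u hpath
  obtain ⟨p, h0, hl, hstep⟩ := hpath
  by_contra hne
  -- injectivity except at the two endpoints
  have inj : ∀ i j : ℕ, i < j → j ≤ ℓ → ¬ (i = 0 ∧ j = ℓ) → p i ≠ p j := by
    intro i j hij hjl hnotend heq
    have hsub : DirPath r (p i) (p i) (j - i) := by
      refine ⟨fun k => p (i + k), by simp, ?_, ?_⟩
      · show p (i + (j - i)) = p i
        rw [show i + (j - i) = j by omega]
        exact heq.symm
      · intro k hk
        have := hstep (i + k) (by omega)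
        rwa [show i + k + 1 = i + (k + 1) by omega] at this
    have := IH (j - i) (by omega) (p i) hsub
    omega
  -- small cases
  rcases Nat.lt_or_ge ℓ 3 with hsmall | hbig
  · interval_cases ℓ
    · exact hne rfl
    · have h1 := hstep 0 (by omega)
      have h2 := hstep 0 (by omega)
      rw [show (0 : ℕ) + 1 = 1 by rfl, hl, h0] at h1
      exact hOT.asymm _ _ h1 h1
    · have h1 := hstep 0 (by omega)
      have h2 := hstep 1 (by omega)
      rw [show (1 : ℕ) + 1 = 2 by rfl, hl, ← h0] at h2
      rw [show (0 : ℕ) + 1 = 1 by rfl] at h1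
      exact hOT.asymm _ _ h1 h2
  -- big case: produce two distinct paths in the tree
  · have hadj : ∀ i < ℓ, (SimpleGraph.fromRel r).Adj (p i) (p (i + 1)) := by
      intro i hi
      rw [SimpleGraph.fromRel_adj]
      exact ⟨inj i (i + 1) (by omega) (by omega) (by omega), Or.inl (hstep i hi)⟩
    set w1 := funWalk (SimpleGraph.fromRel r) p (ℓ - 1)
      (fun i hi => hadj i (by omega)) with hw1def
    have hw1len : w1.length = ℓ - 1 := funWalk_length _ _ _ _
    have hw1path : w1.IsPath := by
      rw [SimpleGraph.Walk.isPath_def, funWalk_support]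
      refine List.Nodup.map_on ?_ List.nodup_range
      intro i hi j hj hij
      rcases Nat.lt_trichotomy i j with h | h | h
      · exact absurd hij (inj i j h (by simp at hj; omega) (by simp at hj; omega))
      · exact h
      · exact absurd hij.symm (inj j i h (by simp at hi; omega) (by simp at hi; omega))
    have hne01 : p 0 ≠ p (ℓ - 1) := inj 0 (ℓ - 1) (by omega) (by omega) (by omega)
    have hadj0 : (SimpleGraph.fromRel r).Adj (p 0) (p (ℓ - 1)) := by
      rw [SimpleGraph.fromRel_adj]
      refine ⟨hne01, Or.inr ?_⟩
      have := hstep (ℓ - 1) (by omega)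
      rwa [show ℓ - 1 + 1 = ℓ by omega, hl, ← h0] at this
    have hpu := SimpleGraph.isAcyclic_iff_path_unique.mp hOT.tree.IsAcyclic
      ⟨w1, hw1path⟩ (SimpleGraph.Path.singleton hadj0)
    have : w1.length = 1 := by
      have := congrArg (fun q : (SimpleGraph.fromRel r).Path (p 0) (p (ℓ - 1)) =>
        q.val.length) hpu
      simpa [SimpleGraph.Path.singleton] using this
    omega

lemma dirPath_asymm (hOT : IsOrientedTree r) {u v : T} {a b : ℕ}
    (h1 : DirPath r u v a) (h2 : DirPath r v u b) : a = 0 ∧ u = v := by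
  have := no_dicycle hOT (a + b) u (dirPath_trans h1 h2)
  have ha : a = 0 := by omega
  subst ha
  exact ⟨rfl, dirPath_eq_of_zero h1⟩

/-- A strict linear order on a 5-element type has a chain of length 4. -/
lemma exists_chain5 {α : Type*} [Fintype α] (hcard : Fintype.card α = 5)
    (R : α → α → Prop) (htot : ∀ a b, a ≠ b → R a b ∨ R b a)
    (htrans : ∀ a b c, R a b → R b c → R a c) (hirr : ∀ a, ¬ R a a) :
    ∃ x0 x1 x2 x3 x4, R x0 x1 ∧ R x1 x2 ∧ R x2 x3 ∧ R x3 x4 := by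
  classical
  let R' : α → α → Prop := fun a b => a = b ∨ R a b
  haveI : DecidableRel R' := Classical.decRel _
  haveI : IsTotal α R' := ⟨fun a b => by
    by_cases h : a = b
    · exact Or.inl (Or.inl h)
    · rcases htot a b h with h' | h'
      exacts [Or.inl (Or.inr h'), Or.inr (Or.inr h')]⟩
  haveI : IsTrans α R' := ⟨fun a b c hab hbc => by
    rcases hab with rfl | hab
    · exact hbc
    rcases hbc with rfl | hbc
    · exact Or.inr hab
    exact Or.inr (htrans _ _ _ hab hbc)⟩
  set L := List.insertionSort R' (Finset.univ : Finset α).toList with hL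
  have hsort : L.Pairwise R' := List.pairwise_insertionSort R' _
  have hperm : List.Perm L (Finset.univ : Finset α).toList := List.perm_insertionSort R' _
  have hnodup : L.Nodup := hperm.nodup_iff.mpr (Finset.nodup_toList _)
  have hlen : L.length = 5 := by
    rw [hperm.length_eq, Finset.length_toList, Finset.card_univ, hcard]
  have key : ∀ (i : ℕ) (h1 : i + 1 < L.length),
      R (L.get ⟨i, by omega⟩) (L.get ⟨i + 1, h1⟩) := by
    intro i h1
    have hr' : R' (L.get ⟨i, by omega⟩) (L.get ⟨i + 1, h1⟩) :=
      hsort.rel_get_of_lt (by simp [Fin.lt_def])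
    rcases hr' with heq | h
    · exfalso
      have := List.nodup_iff_injective_get.mp hnodup heq
      simp [Fin.ext_iff] at this
    · exact h
  exact ⟨L.get ⟨0, by omega⟩, L.get ⟨1, by omega⟩, L.get ⟨2, by omega⟩,
    L.get ⟨3, by omega⟩, L.get ⟨4, by omega⟩,
    key 0 (by omega), key 1 (by omega), key 2 (by omega), key 3 (by omega)⟩

end Aux

/-- No pentagram spider is a willow: a 10-vertex graph with a perfect matching `M`
such that removing the edges of `M` leaves a connected component isomorphic to `K₅`
is not an `n`-willow for any positive `n`. -/
theorem pentagram_spider_not_willow {V : Type*} [Fintype V] (G : SimpleGraph V)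
    (hcard : Fintype.card V = 10)
    (M : G.Subgraph) (hM : M.IsPerfectMatching)
    (K : Finset V) (hK5 : K.card = 5)
    (hclique : ∀ a ∈ K, ∀ b ∈ K, a ≠ b → (G.deleteEdges M.edgeSet).Adj a b)
    (hclosed : ∀ a ∈ K, ∀ b, (G.deleteEdges M.edgeSet).Adj a b → b ∈ K) :
    ¬ IsWillow G := by
  classical
  rintro ⟨n, hn, T, r, f, hOT, hinj, hiff⟩
  -- adjacency inside K
  have hGadj : ∀ a ∈ K, ∀ b ∈ K, a ≠ b → G.Adj a b := fun a ha b hb hab =>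
    (SimpleGraph.deleteEdges_adj.mp (hclique a ha b hb hab)).1
  have hwit : ∀ a ∈ K, ∀ b ∈ K, a ≠ b →
      ∃ s, ¬ n ∣ s ∧ (DirPath r (f a) (f b) s ∨ DirPath r (f b) (f a) s) :=
    fun a ha b hb hab => (hiff a b hab).mp (hGadj a ha b hb hab)
  -- the strict order on K induced by directed paths
  let R : {x // x ∈ K} → {x // x ∈ K} → Prop :=
    fun x y => ∃ s, 0 < s ∧ DirPath r (f x.1) (f y.1) s
  have hirr : ∀ x, ¬ R x x := by
    rintro x ⟨s, hs, hp⟩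
    have := no_dicycle hOT s _ hp
    omega
  have htrans : ∀ x y z, R x y → R y z → R x z := by
    rintro x y z ⟨s, hs, hp⟩ ⟨t, ht, hq⟩
    exact ⟨s + t, by omega, dirPath_trans hp hq⟩
  have htot : ∀ x y, x ≠ y → R x y ∨ R y x := by
    intro x y hxy
    have hne : x.1 ≠ y.1 := fun h => hxy (Subtype.ext h)
    obtain ⟨s, hns, hdir⟩ := hwit x.1 x.2 y.1 y.2 hne
    have hs : 0 < s := by
      rcases Nat.eq_zero_or_pos s with h | h
      · exact absurd (h ▸ dvd_zero n) hns
      · exact h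
    rcases hdir with h | h
    · exact Or.inl ⟨s, hs, h⟩
    · exact Or.inr ⟨s, hs, h⟩
  obtain ⟨x0, x1, x2, x3, x4, h01, h12, h23, h34⟩ :=
    exists_chain5 (by rw [Fintype.card_coe, hK5]) R htot htrans hirr
  -- distinctness facts
  have hne_of_R : ∀ {x y : {x // x ∈ K}}, R x y → (x.1 : V) ≠ y.1 := by
    intro x y hxy h
    exact hirr y (by rwa [Subtype.ext h] at hxy)
  -- the matching partner of the middle vertex
  set a : V := x2.1 with ha_def
  have haK : a ∈ K := x2.2
  obtain ⟨b, hMab, -⟩ := hM.1 (hM.2 a)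
  have hGab : G.Adj a b := hMab.adj_sub
  have hbK : b ∉ K := by
    intro hb
    have h := hclique a haK b hb hGab.ne
    rw [SimpleGraph.deleteEdges_adj] at h
    exact h.2 (SimpleGraph.Subgraph.mem_edgeSet.mpr hMab)
  have hnotadj : ∀ c ∈ K, c ≠ a → ¬ G.Adj b c := by
    intro c hc hca hGbc
    have hne : s(c, b) ∉ M.edgeSet := by
      intro hmem
      rw [SimpleGraph.Subgraph.mem_edgeSet] at hmem
      exact hca ((hM.1 (hM.2 b)).unique hmem.symm hMab.symm)
    have hdel : (G.deleteEdges M.edgeSet).Adj c b := by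
      rw [SimpleGraph.deleteEdges_adj]
      exact ⟨hGbc.symm, hne⟩
    exact hbK (hclosed c hc b hdel)
  have hdiv : ∀ c ∈ K, c ≠ a → ∀ s,
      (DirPath r (f b) (f c) s ∨ DirPath r (f c) (f b) s) → n ∣ s := by
    intro c hc hca s hs
    by_contra hnd
    have hbc : b ≠ c := fun h => hbK (h ▸ hc)
    exact hnotadj c hc hca ((hiff b c hbc).mpr ⟨s, hnd, hs⟩)
  obtain ⟨s, hns, hsdir⟩ := (hiff a b hGab.ne).mp hGab
  -- resolve the direction of the witness for a pair already ordered by R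
  have hdirres : ∀ (x y : {x // x ∈ K}), R x y →
      ∃ z, ¬ n ∣ z ∧ DirPath r (f x.1) (f y.1) z := by
    intro x y hxy
    have hnexy := hne_of_R hxy
    obtain ⟨w, hw0, hwp⟩ := id hxy
    obtain ⟨z, hnz, hzdir⟩ := hwit x.1 x.2 y.1 y.2 hnexy
    rcases hzdir with h | h
    · exact ⟨z, hnz, h⟩
    · exfalso
      have := no_dicycle hOT (w + z) _ (dirPath_trans hwp h)
      have hz : z = 0 := by omega
      exact hnz (hz ▸ dvd_zero n)
  rcases hsdir with hab | hba
  · -- DirPath (f a) (f b) s : use the two predecessors x0, x1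
    obtain ⟨t, ht0, htp⟩ := id h12
    obtain ⟨z, hnz, hz⟩ := hdirres x0 x1 h01
    have d1 : DirPath r (f x1.1) (f b) (t + s) := dirPath_trans htp hab
    have d2 : DirPath r (f x0.1) (f b) (z + (t + s)) := dirPath_trans hz d1
    have hx1a : x1.1 ≠ a := hne_of_R h12
    have hx0a : x0.1 ≠ a := hne_of_R (htrans _ _ _ h01 h12)
    have n1 : n ∣ t + s := hdiv x1.1 x1.2 hx1a _ (Or.inr d1)
    have n2 : n ∣ z + (t + s) := hdiv x0.1 x0.2 hx0a _ (Or.inr d2)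
    exact hnz (by simpa using Nat.dvd_sub n2 n1)
  · -- DirPath (f b) (f a) s : use the two successors x3, x4
    obtain ⟨t, ht0, htp⟩ := id h23
    obtain ⟨z, hnz, hz⟩ := hdirres x3 x4 h34
    have d1 : DirPath r (f b) (f x3.1) (s + t) := dirPath_trans hba htp
    have d2 : DirPath r (f b) (f x4.1) (s + t + z) := dirPath_trans d1 hz
    have hx3a : x3.1 ≠ a := fun h => hne_of_R h23 h.symm
    have hx4a : x4.1 ≠ a := fun h => hne_of_R (htrans _ _ _ h23 h34) h.symm
    have n1 : n ∣ s + t := hdiv x3.1 x3.2 hx3a _ (Or.inl d1)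
    have n2 : n ∣ s + t + z := hdiv x4.1 x4.2 hx4a _ (Or.inl d2)
    exact hnz (by simpa using Nat.dvd_sub n2 n1)
end

section
/- Let G be a graph whose complement is an n-willow defined by an oriented tree T, and suppose u–v–w is an induced path of length 2 in G (uv, vw ∈ E(G), uw ∉ E(G)). Then T has no directed path between u and v, or T has no directed path between v and w. -/
namespace WillowAux

open SimpleGraph

variable {T : Type*} {r : T → T → Prop}

lemma dirPath_concat {x y z : T} {a b : ℕ} (h1 : DirPath r x y a) (h2 : DirPath r y z b) :
    DirPath r x z (a + b) := by
  obtain ⟨p, hp0, hpa, hp⟩ := h1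
  obtain ⟨q, hq0, hqb, hq⟩ := h2
  refine ⟨fun i => if i ≤ a then p i else q (i - a), by simp [hp0], ?_, ?_⟩
  · show (if a + b ≤ a then p (a+b) else q (a + b - a)) = z
    rcases Nat.eq_zero_or_pos b with hb0 | hb0
    · subst hb0
      simp only [Nat.add_zero, le_refl, if_pos]
      rw [hpa, ← hq0]
      exact hqb
    · rw [if_neg (by omega), show a + b - a = b by omega]
      exact hqb
  · intro i hi
    show r (if i ≤ a then p i else q (i - a)) (if i + 1 ≤ a then p (i+1) else q (i + 1 - a))
    by_cases hcase : i + 1 ≤ a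
    · rw [if_pos (by omega : i ≤ a), if_pos hcase]
      exact hp i (by omega)
    · have hia : a ≤ i := by omega
      have e2 : (if i + 1 ≤ a then p (i+1) else q (i + 1 - a)) = q ((i - a) + 1) := by
        rw [if_neg hcase]; congr 1; omega
      have e1 : (if i ≤ a then p i else q (i - a)) = q (i - a) := by
        by_cases h : i ≤ a
        · have hieq : i = a := by omega
          rw [if_pos h, hieq, hpa, ← hq0, Nat.sub_self]
        · rw [if_neg h]
      rw [e1, e2]
      exact hq (i - a) (by omega)

lemma exists_walk (hr : ∀ u v, r u v → ¬ r v u) :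
    ∀ (ℓ : ℕ) (p : ℕ → T), (∀ i < ℓ, r (p i) (p (i+1))) →
    ∃ wk : (fromRel r).Walk (p 0) (p ℓ), wk.length = ℓ ∧
      wk.support = (List.range (ℓ+1)).map p := by
  intro ℓ
  induction ℓ with
  | zero => intro p _; exact ⟨Walk.nil, rfl, by simp [List.range_succ]⟩
  | succ m ih =>
    intro p hp
    obtain ⟨wk, hlen, hsupp⟩ := ih (fun i => p (i+1)) (fun i hi => hp (i+1) (by omega))
    have h0 := hp 0 (by omega)
    have hadj : (fromRel r).Adj (p 0) (p 1) := by
      rw [fromRel_adj]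
      exact ⟨fun he => hr _ _ h0 (he ▸ h0), Or.inl h0⟩
    refine ⟨Walk.cons hadj wk, by simp [hlen], ?_⟩
    rw [Walk.support_cons, hsupp, List.range_succ_eq_map]
    simp [List.range_succ_eq_map, List.map_map, Function.comp_def, Nat.succ_eq_add_one]

lemma dirPath_inj (ht : IsOrientedTree r) {ℓ : ℕ} {p : ℕ → T}
    (hp : ∀ i < ℓ, r (p i) (p (i+1))) :
    ∀ i ≤ ℓ, ∀ j ≤ ℓ, p i = p j → i = j := by
  classical
  by_contra hcon
  push_neg at hcon
  obtain ⟨i, hi, j, hj, hpij, hij⟩ := hcon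
  have hex : ∃ d, 0 < d ∧ ∃ i, i + d ≤ ℓ ∧ p i = p (i + d) := by
    rcases Nat.lt_or_ge i j with h | h
    · exact ⟨j - i, by omega, i, by omega, by rw [show i + (j - i) = j by omega]; exact hpij⟩
    · exact ⟨i - j, by omega, j, by omega, by rw [show j + (i - j) = i by omega]; exact hpij.symm⟩
  obtain ⟨hd, k, hkℓ, hpk⟩ := Nat.find_spec hex
  set d := Nat.find hex with hdef
  have hmin : ∀ d' < d, ¬(0 < d' ∧ ∃ i, i + d' ≤ ℓ ∧ p i = p (i + d')) :=
    fun d' h => Nat.find_min hex h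
  rcases Nat.lt_or_ge d 3 with hd3 | hd3
  · interval_cases d
    · exact ht.asymm _ _ (hp k (by omega)) (by rw [show k + 1 = k + 1 from rfl, ← hpk]; exact hpk ▸ hp k (by omega))
    · have h1 := hp k (by omega)
      have h2 := hp (k+1) (by omega)
      rw [show k + 1 + 1 = k + 2 from rfl, ← hpk] at h2
      exact ht.asymm _ _ h1 h2
  · -- d ≥ 3 : two distinct paths from p (k+1) to p k
    have h0 := hp k (by omega)
    have hadj : (fromRel r).Adj (p (k+1)) (p k) := by
      rw [fromRel_adj]
      exact ⟨fun he => ht.asymm _ _ h0 (he ▸ h0), Or.inr h0⟩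
    obtain ⟨wk, hlen, hsupp⟩ := exists_walk ht.asymm (d-1) (fun j => p (k+1+j))
      (fun j hj => hp (k+1+j) (by omega))
    have hend : p (k+1+(d-1)) = p k := by
      rw [show k+1+(d-1) = k + d by omega]; exact hpk.symm
    let wk' : (fromRel r).Walk (p (k+1)) (p k) := wk.copy rfl hend
    have hnd : wk'.support.Nodup := by
      rw [Walk.support_copy, hsupp]
      refine List.Nodup.map_on ?_ List.nodup_range
      intro x hx y hy hxy
      simp only [List.mem_range] at hx hy
      by_contra hne
      rcases Nat.lt_or_ge x y with h | h
      · exact hmin (y - x) (by omega) ⟨by omega, k+1+x, by omega,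
          by rw [show k+1+x+(y-x) = k+1+y by omega]; exact hxy⟩
      · exact hmin (x - y) (by omega) ⟨by omega, k+1+y, by omega,
          by rw [show k+1+y+(x-y) = k+1+x by omega]; exact hxy.symm⟩
    have hac : (fromRel r).IsAcyclic := ((isTree_iff _).mp ht.tree).2
    have := isAcyclic_iff_path_unique.mp hac (Path.singleton hadj) ⟨wk', Walk.IsPath.mk' hnd⟩
    have hlen' : (1 : ℕ) = d - 1 := by
      have := congrArg (fun P : (fromRel r).Path (p (k+1)) (p k) => P.1.length) this
      simpa [Path.singleton, wk', Walk.length_copy, hlen] using this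
    omega

lemma dirPath_len_unique (ht : IsOrientedTree r) {x y : T} {a b : ℕ}
    (h1 : DirPath r x y a) (h2 : DirPath r x y b) : a = b := by
  obtain ⟨p, hp0, hpa, hp⟩ := h1
  obtain ⟨q, hq0, hqb, hq⟩ := h2
  obtain ⟨w1, hl1, hs1⟩ := exists_walk ht.asymm a p hp
  obtain ⟨w2, hl2, hs2⟩ := exists_walk ht.asymm b q hq
  let w1' : (fromRel r).Walk x y := w1.copy hp0 hpa
  let w2' : (fromRel r).Walk x y := w2.copy hq0 hqb
  have hnd1 : w1'.support.Nodup := by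
    rw [Walk.support_copy, hs1]
    refine List.Nodup.map_on ?_ List.nodup_range
    intro i hi j hj hij
    simp only [List.mem_range] at hi hj
    exact dirPath_inj ht hp i (by omega) j (by omega) hij
  have hnd2 : w2'.support.Nodup := by
    rw [Walk.support_copy, hs2]
    refine List.Nodup.map_on ?_ List.nodup_range
    intro i hi j hj hij
    simp only [List.mem_range] at hi hj
    exact dirPath_inj ht hq i (by omega) j (by omega) hij
  have hac : (fromRel r).IsAcyclic := ((isTree_iff _).mp ht.tree).2
  have heq := isAcyclic_iff_path_unique.mp hac ⟨w1', Walk.IsPath.mk' hnd1⟩ ⟨w2', Walk.IsPath.mk' hnd2⟩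
  have := congrArg (fun P : (fromRel r).Path x y => P.1.length) heq
  simpa [w1', w2', Walk.length_copy, hl1, hl2] using this

lemma dirPath_closed (ht : IsOrientedTree r) {x : T} {ℓ : ℕ}
    (h : DirPath r x x ℓ) : ℓ = 0 := by
  obtain ⟨p, hp0, hpl, hp⟩ := h
  exact (dirPath_inj ht hp 0 (Nat.zero_le _) ℓ le_rfl (by rw [hp0, hpl])).symm

lemma dirPath_antisymm (ht : IsOrientedTree r) {x y : T} {a b : ℕ}
    (h1 : DirPath r x y a) (h2 : DirPath r y x b) : x = y := by
  have h := dirPath_closed ht (dirPath_concat h1 h2)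
  have ha : a = 0 := by omega
  obtain ⟨p, hp0, hpa, _⟩ := h1
  rw [ha] at hpa
  rw [← hp0, hpa]

end WillowAux

/-- If the complement of `G` is an `n`-willow defined by an oriented tree and
`u – v – w` is an induced path of length 2 in `G`, then the tree has no directed
path between `u` and `v`, or no directed path between `v` and `w`. -/
theorem willow_complement_induced_P3 {V T : Type*} (n : ℕ) (hn : 0 < n)
    (G : SimpleGraph V) (r : T → T → Prop) (f : V → T)
    (hw : IsNWillowOn n Gᶜ r f)
    (u v w : V) (huv : G.Adj u v) (hvw : G.Adj v w) (hne : u ≠ w)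
    (huw : ¬ G.Adj u w) :
    (¬ ∃ ℓ, DirPath r (f u) (f v) ℓ ∨ DirPath r (f v) (f u) ℓ) ∨
    (¬ ∃ ℓ, DirPath r (f v) (f w) ℓ ∨ DirPath r (f w) (f v) ℓ) := by
  
  classical
  obtain ⟨ht, hinj, hiff⟩ := hw
  have hfuw : f u ≠ f w := fun h => hne (hinj h)
  have h1 : ∀ ℓ, (DirPath r (f u) (f v) ℓ ∨ DirPath r (f v) (f u) ℓ) → n ∣ ℓ := by
    intro ℓ hℓ
    by_contra hnd
    exact ((SimpleGraph.compl_adj _ _ _).mp ((hiff u v huv.ne).mpr ⟨ℓ, hnd, hℓ⟩)).2 huv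
  have h2 : ∀ ℓ, (DirPath r (f v) (f w) ℓ ∨ DirPath r (f w) (f v) ℓ) → n ∣ ℓ := by
    intro ℓ hℓ
    by_contra hnd
    exact ((SimpleGraph.compl_adj _ _ _).mp ((hiff v w hvw.ne).mpr ⟨ℓ, hnd, hℓ⟩)).2 hvw
  have h3 : ∃ ℓ, ¬ (n ∣ ℓ) ∧ (DirPath r (f u) (f w) ℓ ∨ DirPath r (f w) (f u) ℓ) :=
    (hiff u w hne).mp ((SimpleGraph.compl_adj _ _ _).mpr ⟨hne, huw⟩)
  by_contra hcon
  push_neg at hcon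
  obtain ⟨⟨a, hP⟩, ⟨b, hQ⟩⟩ := hcon
  have hna : n ∣ a := h1 a hP
  have hnb : n ∣ b := h2 b hQ
  obtain ⟨ℓ₀, hℓ₀, hR⟩ := h3
  apply hℓ₀
  rcases hP with hP | hP <;> rcases hQ with hQ | hQ <;> rcases hR with hR | hR
  · -- u→v, v→w, u→w
    have h := WillowAux.dirPath_len_unique ht (WillowAux.dirPath_concat hP hQ) hR
    exact h ▸ Nat.dvd_add hna hnb
  · -- u→v, v→w, w→u
    exact (hfuw (WillowAux.dirPath_antisymm ht (WillowAux.dirPath_concat hP hQ) hR)).elim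
  · -- u→v, w→v, u→w
    have h : ℓ₀ + b = a :=
      WillowAux.dirPath_len_unique ht (WillowAux.dirPath_concat hR hQ) hP
    rw [show ℓ₀ = a - b by omega]
    exact Nat.dvd_sub hna hnb
  · -- u→v, w→v, w→u
    have h : ℓ₀ + a = b :=
      WillowAux.dirPath_len_unique ht (WillowAux.dirPath_concat hR hP) hQ
    rw [show ℓ₀ = b - a by omega]
    exact Nat.dvd_sub hnb hna
  · -- v→u, v→w, u→w
    have h : a + ℓ₀ = b :=
      WillowAux.dirPath_len_unique ht (WillowAux.dirPath_concat hP hR) hQ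
    rw [show ℓ₀ = b - a by omega]
    exact Nat.dvd_sub hnb hna
  · -- v→u, v→w, w→u
    have h : b + ℓ₀ = a :=
      WillowAux.dirPath_len_unique ht (WillowAux.dirPath_concat hQ hR) hP
    rw [show ℓ₀ = a - b by omega]
    exact Nat.dvd_sub hna hnb
  · -- v→u, w→v, u→w
    exact (hfuw (WillowAux.dirPath_antisymm ht hR (WillowAux.dirPath_concat hQ hP))).elim
  · -- v→u, w→v, w→u
    have h : b + a = ℓ₀ :=
      WillowAux.dirPath_len_unique ht (WillowAux.dirPath_concat hQ hP) hR
    exact h ▸ Nat.dvd_add hnb hna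
end

section
/- For every integer n ≥ 7, the complement of the cycle C_n is not a willow. -/
open SimpleGraph
open scoped Classical
open Fin.NatCast Fin.CommRing

section TreeSide

variable {T : Type*} {r : T → T → Prop}

/-- signed length of a walk in `fromRel r` -/
noncomputable def wslen (r : T → T → Prop) {u v : T} (w : (fromRel r).Walk u v) : ℤ :=
  (w.darts.map fun d => if r d.toProd.1 d.toProd.2 then (1 : ℤ) else -1).sum

lemma wslen_append {u v w : T} (p : (fromRel r).Walk u v) (q : (fromRel r).Walk v w) :
    wslen r (p.append q) = wslen r p + wslen r q := by
  unfold wslen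
  rw [SimpleGraph.Walk.darts_append, List.map_append, List.sum_append]

lemma wslen_concat {u v w : T} (p : (fromRel r).Walk u v) (h : (fromRel r).Adj v w) :
    wslen r (p.concat h) = wslen r p + (if r v w then 1 else -1) := by
  unfold wslen
  rw [SimpleGraph.Walk.darts_concat, List.concat_eq_append, List.map_append, List.sum_append]
  simp

lemma wslen_single {u v : T} (h : (fromRel r).Adj u v) :
    wslen r (SimpleGraph.Walk.cons h SimpleGraph.Walk.nil) = (if r u v then 1 else -1) := by
  unfold wslen
  simp

/-- the potential function -/
noncomputable def phi (htree : (fromRel r).IsTree) : T → ℤ :=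
  fun v => wslen r ((htree.isConnected.preconnected htree.isConnected.nonempty.some v).some).toPath.val

lemma phi_eq (htree : (fromRel r).IsTree) {v : T}
    (w : (fromRel r).Walk htree.isConnected.nonempty.some v) (hw : w.IsPath) :
    phi htree v = wslen r w := by
  have pu := isAcyclic_iff_path_unique.mp htree.IsAcyclic
  have h := pu ((htree.isConnected.preconnected htree.isConnected.nonempty.some v).some).toPath ⟨w, hw⟩
  unfold phi
  rw [h]


lemma isPath_concat' {u v w : T} {p : (fromRel r).Walk u v} (hp : p.IsPath)
    (h : (fromRel r).Adj v w) (hw : w ∉ p.support) : (p.concat h).IsPath := by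
  rw [← SimpleGraph.Walk.isPath_reverse_iff, SimpleGraph.Walk.reverse_concat]
  apply SimpleGraph.Walk.IsPath.cons hp.reverse
  rwa [SimpleGraph.Walk.support_reverse, List.mem_reverse]

variable (hasym : ∀ u v, r u v → ¬ r v u) (htree : (fromRel r).IsTree)

include hasym in
lemma phi_step {u v : T} (h : r u v) : phi htree v = phi htree u + 1 := by
  have hne : u ≠ v := by rintro rfl; exact hasym u u h h
  have pu := isAcyclic_iff_path_unique.mp htree.IsAcyclic
  set p : (fromRel r).Walk htree.isConnected.nonempty.some u :=
    ((htree.isConnected.preconnected htree.isConnected.nonempty.some u).some).toPath.val with hpdef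
  have hp : p.IsPath := ((htree.isConnected.preconnected htree.isConnected.nonempty.some u).some).toPath.prop
  have hphiu : phi htree u = wslen r p := rfl
  by_cases hv : v ∈ p.support
  · -- v on the path to u
    set q := p.takeUntil v hv with hq
    set d := p.dropUntil v hv with hd
    have hqp : q.IsPath := hp.takeUntil hv
    have hdp : d.IsPath := hp.dropUntil hv
    have hadj' : (fromRel r).Adj v u := ⟨hne.symm, Or.inr h⟩
    have hsingle : d = (SimpleGraph.Path.singleton hadj').val := by
      have := pu ⟨d, hdp⟩ (SimpleGraph.Path.singleton hadj')
      exact congrArg Subtype.val this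
    have hspec : q.append d = p := SimpleGraph.Walk.take_spec p hv
    have h1 : phi htree v = wslen r q := phi_eq htree q hqp
    have h2 : wslen r p = wslen r q + wslen r d := by rw [← hspec, wslen_append]
    have h3 : wslen r d = -1 := by
      rw [hsingle]
      have : (SimpleGraph.Path.singleton hadj').val
          = SimpleGraph.Walk.cons hadj' SimpleGraph.Walk.nil := rfl
      rw [this, wslen_single, if_neg (hasym u v h)]
    rw [hphiu, h2, h3, h1]
    ring
  · -- extend the path
    have hadj' : (fromRel r).Adj u v := ⟨hne, Or.inl h⟩
    have hcp : (p.concat hadj').IsPath := isPath_concat' hp hadj' hv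
    have h1 : phi htree v = wslen r (p.concat hadj') := phi_eq htree _ hcp
    rw [h1, wslen_concat, if_pos h, hphiu]

include hasym in
lemma phi_dirPath {u v : T} {ℓ : ℕ} (h : DirPath r u v ℓ) :
    phi htree v = phi htree u + ℓ := by
  induction ℓ generalizing v with
  | zero =>
    obtain ⟨p, h0, hl, _⟩ := h
    rw [← h0, hl]; simp
  | succ ℓ ih =>
    obtain ⟨p, h0, hl, hs⟩ := h
    have hprev : DirPath r u (p ℓ) ℓ := ⟨p, h0, rfl, fun i hi => hs i (Nat.lt_succ_of_lt hi)⟩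
    have hstep : r (p ℓ) (p (ℓ + 1)) := hs ℓ (Nat.lt_succ_self ℓ)
    have := phi_step hasym htree hstep
    rw [hl] at this
    rw [this, ih hprev]
    push_cast
    ring

/-- the strict order -/
def rlt (r : T → T → Prop) (u v : T) : Prop := u ≠ v ∧ ∃ ℓ, DirPath r u v ℓ

lemma dirPath_refl (u : T) : DirPath r u u 0 := ⟨fun _ => u, rfl, rfl, by omega⟩

lemma dirPath_concat_mid {u v w : T} {ℓ₁ ℓ₂ : ℕ} (h₁ : DirPath r u v ℓ₁)
    (h₂ : DirPath r v w ℓ₂) :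
    ∃ p : ℕ → T, (p 0 = u ∧ p (ℓ₁ + ℓ₂) = w ∧ ∀ i < ℓ₁ + ℓ₂, r (p i) (p (i + 1))) ∧ p ℓ₁ = v := by
  obtain ⟨p, hp0, hp1, hps⟩ := h₁
  obtain ⟨q, hq0, hq1, hqs⟩ := h₂
  refine ⟨fun t => if t ≤ ℓ₁ then p t else q (t - ℓ₁), ⟨by simp [hp0], ?_, ?_⟩,
    by dsimp only; rw [if_pos le_rfl, hp1]⟩
  · dsimp only
    by_cases h : ℓ₂ = 0
    · subst h; simpa [hp1, ← hq0] using hq1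
    · rw [if_neg (by omega)]
      simpa using hq1
  · intro i hi
    dsimp only
    by_cases h1 : i + 1 ≤ ℓ₁
    · rw [if_pos (by omega), if_pos h1]
      exact hps i (by omega)
    · by_cases h2 : i ≤ ℓ₁
      · have : i = ℓ₁ := by omega
        subst this
        rw [if_pos le_rfl, if_neg h1, hp1, ← hq0]
        have : i + 1 - i = 1 := by omega
        rw [this]
        exact hqs 0 (by omega)
      · rw [if_neg h2, if_neg h1]
        have : i + 1 - ℓ₁ = (i - ℓ₁) + 1 := by omega
        rw [this]
        exact hqs (i - ℓ₁) (by omega)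

lemma dirPath_concat {u v w : T} {ℓ₁ ℓ₂ : ℕ} (h₁ : DirPath r u v ℓ₁) (h₂ : DirPath r v w ℓ₂) :
    DirPath r u w (ℓ₁ + ℓ₂) := by
  obtain ⟨p, hp, -⟩ := dirPath_concat_mid h₁ h₂
  exact ⟨p, hp⟩

lemma dirPath_segment {p : ℕ → T} {ℓ : ℕ} (hs : ∀ i < ℓ, r (p i) (p (i + 1)))
    {i j : ℕ} (hij : i ≤ j) (hj : j ≤ ℓ) : DirPath r (p i) (p j) (j - i) := by
  refine ⟨fun t => p (i + t), by simp, ?_, ?_⟩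
  · dsimp only
    rw [Nat.add_sub_cancel' hij]
  · intro t ht
    dsimp only
    have : i + (t + 1) = (i + t) + 1 := by omega
    rw [this]
    exact hs (i + t) (by omega)

include hasym htree in
lemma rlt_trans {u v w : T} (h₁ : rlt r u v) (h₂ : rlt r v w) : rlt r u w := by
  obtain ⟨hne₁, ℓ₁, hd₁⟩ := h₁
  obtain ⟨hne₂, ℓ₂, hd₂⟩ := h₂
  refine ⟨?_, ℓ₁ + ℓ₂, dirPath_concat hd₁ hd₂⟩
  intro he
  have e1 := phi_dirPath hasym htree hd₁
  have e2 := phi_dirPath hasym htree hd₂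
  rw [he] at e1
  have hz : (ℓ₁ : ℤ) + ℓ₂ = 0 := by omega
  have : ℓ₁ = 0 := by omega
  subst this
  obtain ⟨p, h0, h1, _⟩ := hd₁
  exact hne₁ (h0 ▸ h1 ▸ rfl)

include hasym htree in
lemma rlt_asymm {u v : T} (h₁ : rlt r u v) (h₂ : rlt r v u) : False := by
  obtain ⟨hne₁, ℓ₁, hd₁⟩ := h₁
  obtain ⟨_, ℓ₂, hd₂⟩ := h₂
  have e1 := phi_dirPath hasym htree hd₁
  have e2 := phi_dirPath hasym htree hd₂
  have : ℓ₁ = 0 := by omega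
  subst this
  obtain ⟨p, h0, h1, _⟩ := hd₁
  exact hne₁ (h0 ▸ h1 ▸ rfl)


include hasym in
lemma exists_dirWalk : ∀ (ℓ : ℕ) (p : ℕ → T), (∀ i < ℓ, r (p i) (p (i + 1))) →
    ∃ w : (fromRel r).Walk (p 0) (p ℓ), w.support = (List.range (ℓ + 1)).map p := by
  intro ℓ
  induction ℓ with
  | zero => exact fun p _ => ⟨SimpleGraph.Walk.nil, by rw [List.range_succ]; simp⟩
  | succ ℓ ih =>
    intro p hs
    obtain ⟨w', hw'⟩ := ih (fun i => p (i + 1)) (fun i hi => hs (i + 1) (by omega))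
    have h0 : r (p 0) (p 1) := hs 0 (by omega)
    have hne : p 0 ≠ p 1 := by
      intro he
      rw [he] at h0
      exact hasym _ _ h0 h0
    refine ⟨SimpleGraph.Walk.cons ((SimpleGraph.fromRel_adj _ _ _).mpr ⟨hne, Or.inl h0⟩ : (fromRel r).Adj (p 0) (p 1)) w', ?_⟩
    rw [SimpleGraph.Walk.support_cons, hw', List.range_succ_eq_map (n := ℓ + 1), List.map_cons,
      List.map_map]
    rfl

include hasym htree in
lemma dirWalk_isPath {u v : T} {ℓ : ℕ} {p : ℕ → T} (h0 : p 0 = u) (h1 : p ℓ = v)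
    (hs : ∀ i < ℓ, r (p i) (p (i + 1))) :
    ∃ w : (fromRel r).Walk u v, w.IsPath ∧ w.support = (List.range (ℓ + 1)).map p := by
  obtain ⟨w, hw⟩ := exists_dirWalk hasym ℓ p hs
  subst h0; subst h1
  refine ⟨w, ?_, hw⟩
  rw [SimpleGraph.Walk.isPath_def, hw]
  apply List.Nodup.map_on ?_ List.nodup_range
  intro i hi j hj hij
  rw [List.mem_range] at hi hj
  rcases le_total i j with hle | hle
  · have hd : DirPath r (p i) (p j) (j - i) := dirPath_segment hs hle (by omega)
    have := phi_dirPath hasym htree hd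
    rw [← hij] at this
    omega
  · have hd : DirPath r (p j) (p i) (i - j) := dirPath_segment hs hle (by omega)
    have := phi_dirPath hasym htree hd
    rw [hij] at this
    omega

include hasym htree in
lemma rlt_T4 {a b c d : T} (h1 : rlt r a c) (h2 : rlt r c b) (h3 : rlt r a d)
    (h4 : rlt r d b) (hcd : c ≠ d) : rlt r c d ∨ rlt r d c := by
  obtain ⟨-, ℓ₁, hd₁⟩ := h1
  obtain ⟨-, ℓ₂, hd₂⟩ := h2
  obtain ⟨-, ℓ₃, hd₃⟩ := h3
  obtain ⟨-, ℓ₄, hd₄⟩ := h4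
  have hLL : ℓ₁ + ℓ₂ = ℓ₃ + ℓ₄ := by
    have e1 := phi_dirPath hasym htree (dirPath_concat hd₁ hd₂)
    have e2 := phi_dirPath hasym htree (dirPath_concat hd₃ hd₄)
    omega
  obtain ⟨pP, ⟨hP0, hP1, hPs⟩, hPmid⟩ := dirPath_concat_mid hd₁ hd₂
  obtain ⟨pQ, ⟨hQ0, hQ1, hQs⟩, hQmid⟩ := dirPath_concat_mid hd₃ hd₄
  obtain ⟨wP, hwPpath, hwPsup⟩ := dirWalk_isPath hasym htree hP0 hP1 hPs
  obtain ⟨wQ, hwQpath, hwQsup⟩ := dirWalk_isPath hasym htree hQ0 hQ1 hQs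
  have pu := isAcyclic_iff_path_unique.mp htree.IsAcyclic
  have hweq : wP = wQ := congrArg Subtype.val (pu ⟨wP, hwPpath⟩ ⟨wQ, hwQpath⟩)
  have hdmem : d ∈ (List.range (ℓ₁ + ℓ₂ + 1)).map pP := by
    rw [← hwPsup, hweq, hwQsup]
    exact List.mem_map.mpr ⟨ℓ₃, List.mem_range.mpr (by omega), hQmid⟩
  obtain ⟨i, hi, hieq⟩ := List.mem_map.mp hdmem
  rw [List.mem_range] at hi
  rcases le_total i ℓ₁ with hle | hle
  · right
    refine ⟨hcd.symm, ℓ₁ - i, ?_⟩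
    have := dirPath_segment hPs hle (by omega)
    rwa [hieq, hPmid] at this
  · left
    refine ⟨hcd, i - ℓ₁, ?_⟩
    have := dirPath_segment hPs hle (by omega)
    rwa [hieq, hPmid] at this

end TreeSide

section Comb

variable {k : ℕ} {α : Type*} {x : Fin (k+7) → α} {lt : α → α → Prop}

theorem main_comb
    (hAsym : ∀ a b, lt a b → lt b a → False)
    (hTrans : ∀ a b c, lt a b → lt b c → lt a c)
    (hNe : ∀ i j : Fin (k+7), i ≠ j → x i ≠ x j)
    (H1 : ∀ i j : Fin (k+7), j ≠ i → j ≠ i + 1 → i ≠ j + 1 →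
      lt (x i) (x j) ∨ lt (x j) (x i))
    (H2 : ∀ i : Fin (k+7),
      ¬((lt (x i) (x (i+1)) ∨ lt (x (i+1)) (x i)) ∧
        (lt (x (i+1)) (x (i+2)) ∨ lt (x (i+2)) (x (i+1)))))
    (H3 : ∀ a b c d : Fin (k+7), lt (x a) (x c) → lt (x c) (x b) → lt (x a) (x d) →
      lt (x d) (x b) → x c ≠ x d → lt (x c) (x d) ∨ lt (x d) (x c)) :
    False := by
  -- cast arithmetic helpers
  have castne : ∀ c d : ℕ, c < 2*(k+7) → d < 2*(k+7) → ¬(c = d) → ¬(c = d + (k+7)) →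
      ¬(d = c + (k+7)) → ((c : Fin (k+7)) ≠ (d : Fin (k+7))) := by
    intro c d hc hd h1 h2 h3 heq
    have hv : c % (k+7) = d % (k+7) := by
      have := congrArg Fin.val heq
      simpa [Fin.val_natCast] using this
    rcases le_total c d with hle | hle
    · obtain ⟨t, ht⟩ := (Nat.modEq_iff_dvd' hle).mp hv
      match t with
      | 0 => omega
      | 1 => omega
      | (t+2) =>
        have : (k+7) * 2 ≤ (k+7) * (t+2) := Nat.mul_le_mul_left _ (by omega)
        omega
    · obtain ⟨t, ht⟩ := (Nat.modEq_iff_dvd' hle).mp hv.symm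
      match t with
      | 0 => omega
      | 1 => omega
      | (t+2) =>
        have : (k+7) * 2 ≤ (k+7) * (t+2) := Nat.mul_le_mul_left _ (by omega)
        omega
  have numne : ∀ (i : Fin (k+7)) (c d : ℕ), c ≤ 6 → d ≤ 6 → c ≠ d →
      i + (c : ℕ) ≠ i + (d : ℕ) := by
    intro i c d hc hd hcd he
    exact castne c d (by omega) (by omega) (by omega) (by omega) (by omega)
      (add_left_cancel he)
  -- specific index facts
  have hi01 : ∀ i : Fin (k+7), i ≠ i + 1 := fun i => by
    have := numne i 0 1 (by omega) (by omega) (by omega); simpa using this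
  have hi03 : ∀ i : Fin (k+7), i ≠ i + 3 := fun i => by
    have := numne i 0 3 (by omega) (by omega) (by omega); simpa using this
  have hi04 : ∀ i : Fin (k+7), i ≠ i + 4 := fun i => by
    have := numne i 0 4 (by omega) (by omega) (by omega); simpa using this
  have hi31 : ∀ i : Fin (k+7), i + 3 ≠ i + 1 := fun i => by
    have := numne i 3 1 (by omega) (by omega) (by omega); simpa using this
  have hi32 : ∀ i : Fin (k+7), i + 3 ≠ i + 2 := fun i => by
    have := numne i 3 2 (by omega) (by omega) (by omega); simpa using this
  have hi14 : ∀ i : Fin (k+7), i + 1 ≠ i + 4 := fun i => by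
    have := numne i 1 4 (by omega) (by omega) (by omega); simpa using this
  have ar21 : ∀ i : Fin (k+7), (i + 1) + 1 = i + 2 := fun i => by ring
  have ar34 : ∀ i : Fin (k+7), (i + 3) + 1 = i + 4 := fun i => by ring
  have ar12 : ∀ i : Fin (k+7), (i + 1) + 2 = i + 3 := fun i => by ring
  have ar24 : ∀ i : Fin (k+7), (i + 2) + 2 = i + 4 := fun i => by ring
  -- the incomparability predicate on edges
  set P : Fin (k+7) → Prop := fun i => ¬(lt (x i) (x (i+1)) ∨ lt (x (i+1)) (x i)) with hPdef
  -- matching rule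
  have R : ∀ i : Fin (k+7), P i ∨ P (i + 1) := by
    intro i
    by_cases h : P i
    · exact Or.inl h
    · right
      have hCi : lt (x i) (x (i+1)) ∨ lt (x (i+1)) (x i) := by
        by_contra hcc
        exact h hcc
      intro hc
      rw [ar21 i] at hc
      exact H2 i ⟨hCi, hc⟩
  -- side dichotomy
  have side2 : ∀ i l l' : Fin (k+7), P i →
      (lt (x (i+1)) (x l) ∨ lt (x l) (x (i+1))) →
      (lt (x (i+1)) (x l') ∨ lt (x l') (x (i+1))) →
      lt (x l) (x i) → lt (x i) (x l') → False := by
    intro i l l' hP hcl hcl' hlo hhi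
    have h1 : lt (x l) (x (i+1)) := by
      rcases hcl with h | h
      · exact absurd (Or.inr (hTrans _ _ _ h hlo)) hP
      · exact h
    have h2 : lt (x (i+1)) (x l') := by
      rcases hcl' with h | h
      · exact h
      · exact absurd (Or.inl (hTrans _ _ _ hhi h)) hP
    exact hP (H3 l l' i (i+1) hlo hhi h1 h2 (hNe i (i+1) (hi01 i)))
  -- up/down dichotomy
  have hUD : ∀ e : Fin (k+7), lt (x e) (x (e+3)) ∨ lt (x (e+3)) (x e) := by
    intro e
    refine H1 e (e+3) (Ne.symm (hi03 e)) (hi31 e) ?_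
    rw [ar34 e]
    exact hi04 e
  -- core clash lemmas
  have clashUp : ∀ p q : Fin (k+7), P p → P q → q ≠ p → q ≠ p + 1 → p ≠ q + 1 → p ≠ q + 2 →
      lt (x p) (x (p+3)) → lt (x q) (x (q+3)) → False := by
    intro p q hp hq h1 h2 h3 h4 up uq
    have Cq1p : lt (x (q+1)) (x p) ∨ lt (x p) (x (q+1)) := by
      refine H1 (q+1) p h3 ?_ ?_
      · rw [ar21 q]; exact h4
      · intro h; exact h1 (add_right_cancel h)
    have Cq1q3 : lt (x (q+1)) (x (q+3)) ∨ lt (x (q+3)) (x (q+1)) := by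
      refine H1 (q+1) (q+3) (hi31 q) ?_ ?_
      · rw [ar21 q]; exact hi32 q
      · rw [ar34 q]; exact hi14 q
    have hnpq : ¬ lt (x p) (x q) := fun h => side2 q p (q+3) hq Cq1p Cq1q3 h uq
    have hqp : lt (x q) (x p) := by
      have := H1 q p (Ne.symm h1) h3 h2
      exact this.resolve_right hnpq
    have hq1p : lt (x (q+1)) (x p) := by
      rcases Cq1p with h | h
      · exact h
      · exact absurd (Or.inl (hTrans _ _ _ hqp h)) hq
    have Cp1q1 : lt (x (p+1)) (x (q+1)) ∨ lt (x (q+1)) (x (p+1)) := by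
      refine H1 (p+1) (q+1) ?_ ?_ ?_
      · intro h; exact h1 (add_right_cancel h)
      · rw [ar21 p]; intro h
        rw [show p + 2 = (p+1)+1 from (ar21 p).symm] at h
        exact h2 (add_right_cancel h)
      · rw [ar21 q]; intro h
        rw [show q + 2 = (q+1)+1 from (ar21 q).symm] at h
        exact h3 (add_right_cancel h)
    have Cp1p3 : lt (x (p+1)) (x (p+3)) ∨ lt (x (p+3)) (x (p+1)) := by
      refine H1 (p+1) (p+3) (hi31 p) ?_ ?_
      · rw [ar21 p]; exact hi32 p
      · rw [ar34 p]; exact hi14 p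
    exact side2 p (q+1) (p+3) hp Cp1q1 Cp1p3 hq1p up
  have clashDn : ∀ p q : Fin (k+7), P p → P q → q ≠ p → q ≠ p + 1 → p ≠ q + 1 → p ≠ q + 2 →
      lt (x (p+3)) (x p) → lt (x (q+3)) (x q) → False := by
    intro p q hp hq h1 h2 h3 h4 dp dq
    have Cq1p : lt (x (q+1)) (x p) ∨ lt (x p) (x (q+1)) := by
      refine H1 (q+1) p h3 ?_ ?_
      · rw [ar21 q]; exact h4
      · intro h; exact h1 (add_right_cancel h)
    have Cq1q3 : lt (x (q+1)) (x (q+3)) ∨ lt (x (q+3)) (x (q+1)) := by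
      refine H1 (q+1) (q+3) (hi31 q) ?_ ?_
      · rw [ar21 q]; exact hi32 q
      · rw [ar34 q]; exact hi14 q
    have hnqp : ¬ lt (x q) (x p) := fun h => side2 q (q+3) p hq Cq1q3 Cq1p dq h
    have hpq : lt (x p) (x q) := by
      have := H1 q p (Ne.symm h1) h3 h2
      exact this.resolve_left hnqp
    have hpq1 : lt (x p) (x (q+1)) := by
      rcases Cq1p with h | h
      · exact absurd (Or.inr (hTrans _ _ _ h hpq)) hq
      · exact h
    have Cp1q1 : lt (x (p+1)) (x (q+1)) ∨ lt (x (q+1)) (x (p+1)) := by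
      refine H1 (p+1) (q+1) ?_ ?_ ?_
      · intro h; exact h1 (add_right_cancel h)
      · rw [ar21 p]; intro h
        rw [show p + 2 = (p+1)+1 from (ar21 p).symm] at h
        exact h2 (add_right_cancel h)
      · rw [ar21 q]; intro h
        rw [show q + 2 = (q+1)+1 from (ar21 q).symm] at h
        exact h3 (add_right_cancel h)
    have Cp1p3 : lt (x (p+1)) (x (p+3)) ∨ lt (x (p+3)) (x (p+1)) := by
      refine H1 (p+1) (p+3) (hi31 p) ?_ ?_
      · rw [ar21 p]; exact hi32 p
      · rw [ar34 p]; exact hi14 p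
    exact side2 p (p+3) (q+1) hp Cp1p3 Cp1q1 dp hpq1
  -- wrappers handling the p = q + 2 case
  have pairUp : ∀ p q : Fin (k+7), P p → P q → q ≠ p → q ≠ p + 1 → p ≠ q + 1 →
      lt (x p) (x (p+3)) → lt (x q) (x (q+3)) → False := by
    intro p q hp hq h1 h2 h3 up uq
    by_cases h4 : p = q + 2
    · refine clashUp q p hq hp (Ne.symm h1) h3 h2 ?_ uq up
      intro h
      rw [h, ar24 p] at h4
      exact hi04 p h4
    · exact clashUp p q hp hq h1 h2 h3 h4 up uq
  have pairDn : ∀ p q : Fin (k+7), P p → P q → q ≠ p → q ≠ p + 1 → p ≠ q + 1 →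
      lt (x (p+3)) (x p) → lt (x (q+3)) (x q) → False := by
    intro p q hp hq h1 h2 h3 dp dq
    by_cases h4 : p = q + 2
    · refine clashDn q p hq hp (Ne.symm h1) h3 h2 ?_ dq dp
      intro h
      rw [h, ar24 p] at h4
      exact hi04 p h4
    · exact clashDn p q hp hq h1 h2 h3 h4 dp dq
  -- natural-number indexed rule
  have Rn : ∀ t : ℕ, P (t : Fin (k+7)) ∨ P ((t+1 : ℕ) : Fin (k+7)) := by
    intro t
    have := R (t : Fin (k+7))
    rwa [show ((t : Fin (k+7)) + 1) = ((t+1 : ℕ) : Fin (k+7)) by push_cast; ring] at this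
  -- build the triple
  obtain ⟨a, ha, hPa⟩ : ∃ a : ℕ, a ≤ 1 ∧ P (a : Fin (k+7)) := by
    rcases Rn 0 with h | h
    · exact ⟨0, by omega, h⟩
    · exact ⟨1, by omega, h⟩
  obtain ⟨b, hb, hPb⟩ : ∃ b : ℕ, (b = a + 2 ∨ (b = a + 3 ∧ ¬ P ((a+2 : ℕ) : Fin (k+7)))) ∧
      P (b : Fin (k+7)) := by
    by_cases h : P ((a+2 : ℕ) : Fin (k+7))
    · exact ⟨a+2, Or.inl rfl, h⟩
    · exact ⟨a+3, Or.inr ⟨rfl, h⟩, (Rn (a+2)).resolve_left h⟩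
  obtain ⟨c, hc, hPc⟩ : ∃ c : ℕ, (c = b + 2 ∨ (c = b + 3 ∧ ¬ P ((b+2 : ℕ) : Fin (k+7)))) ∧
      P (c : Fin (k+7)) := by
    by_cases h : P ((b+2 : ℕ) : Fin (k+7))
    · exact ⟨b+2, Or.inl rfl, h⟩
    · exact ⟨b+3, Or.inr ⟨rfl, h⟩, (Rn (b+2)).resolve_left h⟩
  -- getting three pairwise non-consecutive incomparable edges
  have key : ∃ u v w : ℕ, P (u : Fin (k+7)) ∧ P (v : Fin (k+7)) ∧ P (w : Fin (k+7)) ∧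
      u < v ∧ v < w ∧ 2 ≤ v - u ∧ v - u ≤ 5 ∧ 2 ≤ w - v ∧ w - v ≤ 5 ∧
      4 ≤ w - u ∧ w - u + 2 ≤ k + 7 ∧ w ≤ k + 7 := by
    by_cases hbad : k = 0 ∧ b = a + 3 ∧ c = b + 3
    · obtain ⟨hk0, hb3, hc3⟩ := hbad
      have hnb2 : ¬ P ((a+2 : ℕ) : Fin (k+7)) := by
        rcases hb with h | ⟨_, h⟩
        · omega
        · exact h
      have hnc2 : ¬ P ((b+2 : ℕ) : Fin (k+7)) := by
        rcases hc with h | ⟨_, h⟩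
        · omega
        · exact h
      have hnc2' : ¬ P ((a+5 : ℕ) : Fin (k+7)) := by
        rwa [show a + 5 = b + 2 by omega]
      refine ⟨a+1, a+4, a+6, ?_, ?_, ?_, by omega, by omega, by omega, by omega, by omega,
        by omega, by omega, by omega, by omega⟩
      · exact (Rn (a+1)).resolve_right hnb2
      · exact (Rn (a+4)).resolve_right hnc2'
      · exact (Rn (a+5)).resolve_left hnc2'
    · have hb' : a + 2 ≤ b ∧ b ≤ a + 3 := by rcases hb with h | ⟨h, _⟩ <;> omega
      have hc' : b + 2 ≤ c ∧ c ≤ b + 3 := by rcases hc with h | ⟨h, _⟩ <;> omega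
      have harith : 1 ≤ k ∨ b ≤ a + 2 ∨ c ≤ b + 2 := by
        by_contra hh
        push_neg at hh
        exact hbad ⟨by omega, by omega, by omega⟩
      refine ⟨a, b, c, hPa, hPb, hPc, by omega, by omega, by omega, by omega, by omega,
        by omega, by omega, ?_, ?_⟩ <;> rcases harith with h | h | h <;> omega
  obtain ⟨u, v, w, hPu, hPv, hPw, huv, hvw, h2uv, h5uv, h2vw, h5vw, h4uw, hwrap, hwbound⟩ := key
  -- pairwise non-consecutiveness facts
  have huw : u < w := by omega
  have nc : ∀ u' v' : ℕ, v' ≤ k + 7 → u' < v' → 2 ≤ v' - u' → v' - u' + 2 ≤ k + 7 →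
      ((v' : Fin (k+7)) ≠ (u' : Fin (k+7)) ∧
       (v' : Fin (k+7)) ≠ (u' : Fin (k+7)) + 1 ∧
       (u' : Fin (k+7)) ≠ (v' : Fin (k+7)) + 1) := by
    intro u' v' h0 h1 h2 h3
    refine ⟨castne v' u' (by omega) (by omega) (by omega) (by omega) (by omega), ?_, ?_⟩
    · have := castne v' (u'+1) (by omega) (by omega) (by omega) (by omega) (by omega)
      intro h; apply this; rw [h]; push_cast; ring
    · have := castne u' (v'+1) (by omega) (by omega) (by omega) (by omega) (by omega)
      intro h; apply this; rw [h]; push_cast; ring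
  obtain ⟨nuv1, nuv2, nuv3⟩ := nc u v (by omega) huv h2uv (by omega)
  obtain ⟨nvw1, nvw2, nvw3⟩ := nc v w (by omega) hvw h2vw (by omega)
  obtain ⟨nuw1, nuw2, nuw3⟩ := nc u w (by omega) huw (by omega) hwrap
  -- pigeonhole on up/down
  rcases hUD (u : Fin (k+7)) with du | du <;> rcases hUD (v : Fin (k+7)) with dv | dv <;>
    rcases hUD (w : Fin (k+7)) with dw | dw
  · exact pairUp _ _ hPu hPv nuv1 nuv2 nuv3 du dv
  · exact pairUp _ _ hPu hPv nuv1 nuv2 nuv3 du dv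
  · exact pairUp _ _ hPu hPw nuw1 nuw2 nuw3 du dw
  · exact pairDn _ _ hPv hPw nvw1 nvw2 nvw3 dv dw
  · exact pairUp _ _ hPv hPw nvw1 nvw2 nvw3 dv dw
  · exact pairDn _ _ hPu hPw nuw1 nuw2 nuw3 du dw
  · exact pairDn _ _ hPu hPv nuv1 nuv2 nuv3 du dv
  · exact pairDn _ _ hPu hPv nuv1 nuv2 nuv3 du dv
end Comb


/-- For every `n ≥ 7`, the complement of the cycle `Cₙ` is not a willow. -/
theorem complement_cycle_not_willow (n : ℕ) (hn : 7 ≤ n) :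
    ¬ IsWillow (SimpleGraph.cycleGraph n)ᶜ := by
  obtain ⟨k, rfl⟩ : ∃ k, n = k + 7 := ⟨n - 7, by omega⟩
  rintro ⟨m, hm, T, r, f, ⟨hasym, htree⟩, hinj, hadj⟩
  -- index arithmetic helpers
  have cycAdj' : ∀ u v : Fin (k+7), (SimpleGraph.cycleGraph (k+7)).Adj u v ↔
      (u = v + 1 ∨ v = u + 1) := by
    intro u v
    rw [SimpleGraph.cycleGraph_adj (n := k+5), sub_eq_iff_eq_add, sub_eq_iff_eq_add,
      add_comm (1 : Fin (k+7)) v, add_comm (1 : Fin (k+7)) u]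
  have cval : ∀ c : ℕ, c < k+7 → ((c : ℕ) : Fin (k+7)).val = c := fun c hc => by
    rw [Fin.val_natCast, Nat.mod_eq_of_lt hc]
  have cne : ∀ c d : ℕ, c < k+7 → d < k+7 → c ≠ d →
      ((c : ℕ) : Fin (k+7)) ≠ ((d : ℕ) : Fin (k+7)) := by
    intro c d hc hd h he
    rw [Fin.ext_iff, cval c hc, cval d hd] at he
    exact h he
  have addne : ∀ (i : Fin (k+7)) (c d : ℕ), c < k+7 → d < k+7 → c ≠ d →
      i + (c : ℕ) ≠ i + (d : ℕ) := fun i c d hc hd h he => cne c d hc hd h (add_left_cancel he)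
  have i01 : ∀ i : Fin (k+7), i ≠ i + 1 := fun i => by
    have := addne i 0 1 (by omega) (by omega) (by omega); simpa using this
  have i02 : ∀ i : Fin (k+7), i ≠ i + 2 := fun i => by
    have := addne i 0 2 (by omega) (by omega) (by omega); simpa using this
  have i03 : ∀ i : Fin (k+7), i ≠ i + 3 := fun i => by
    have := addne i 0 3 (by omega) (by omega) (by omega); simpa using this
  have i21 : ∀ i : Fin (k+7), i + 2 ≠ i + 1 := fun i => by
    have := addne i 2 1 (by omega) (by omega) (by omega); simpa using this
  have ar21 : ∀ i : Fin (k+7), (i + 1) + 1 = i + 2 := fun i => by ring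
  have ar23 : ∀ i : Fin (k+7), (i + 2) + 1 = i + 3 := fun i => by ring
  -- H1 : distant pairs are comparable
  have H1 : ∀ i j : Fin (k+7), j ≠ i → j ≠ i + 1 → i ≠ j + 1 →
      rlt r (f i) (f j) ∨ rlt r (f j) (f i) := by
    intro i j h1 h2 h3
    have hGadj : ((SimpleGraph.cycleGraph (k+7))ᶜ).Adj i j := by
      rw [SimpleGraph.compl_adj]
      refine ⟨h1.symm, ?_⟩
      rw [cycAdj']
      rintro (h | h)
      · exact h3 h
      · exact h2 h
    obtain ⟨ℓ, hnd, hor⟩ := (hadj i j h1.symm).mp hGadj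
    rcases hor with h | h
    · exact Or.inl ⟨hinj.ne h1.symm, ℓ, h⟩
    · exact Or.inr ⟨hinj.ne h1, ℓ, h⟩
  -- all directed path lengths between cyclically consecutive vertices are divisible by m
  have nonadj : ∀ i : Fin (k+7), ∀ ℓ : ℕ,
      (DirPath r (f i) (f (i+1)) ℓ ∨ DirPath r (f (i+1)) (f i) ℓ) → m ∣ ℓ := by
    intro i ℓ hd
    by_contra hnd
    have hGadj : ((SimpleGraph.cycleGraph (k+7))ᶜ).Adj i (i+1) :=
      (hadj i (i+1) (i01 i)).mpr ⟨ℓ, hnd, hd⟩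
    rw [SimpleGraph.compl_adj, cycAdj'] at hGadj
    exact hGadj.2 (Or.inr rfl)
  -- divisibility of potential differences across consecutive pairs
  have phidiff : ∀ i : Fin (k+7),
      (rlt r (f i) (f (i+1)) ∨ rlt r (f (i+1)) (f i)) →
      (m : ℤ) ∣ (phi htree (f (i+1)) - phi htree (f i)) := by
    intro i hc
    rcases hc with ⟨-, ℓ, hd⟩ | ⟨-, ℓ, hd⟩
    · have he := phi_dirPath hasym htree hd
      have hm' : m ∣ ℓ := nonadj i ℓ (Or.inl hd)
      rw [show phi htree (f (i+1)) - phi htree (f i) = (ℓ : ℤ) by omega]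
      exact_mod_cast hm'
    · have he := phi_dirPath hasym htree hd
      have hm' : m ∣ ℓ := nonadj i ℓ (Or.inr hd)
      rw [show phi htree (f (i+1)) - phi htree (f i) = -(ℓ : ℤ) by omega]
      exact dvd_neg.mpr (by exact_mod_cast hm')
  -- H2 : no two adjacent comparable consecutive pairs
  have H2 : ∀ i : Fin (k+7),
      ¬((rlt r (f i) (f (i+1)) ∨ rlt r (f (i+1)) (f i)) ∧
        (rlt r (f (i+1)) (f (i+2)) ∨ rlt r (f (i+2)) (f (i+1)))) := by
    rintro i ⟨hc1, hc2⟩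
    have d1 := phidiff i hc1
    have d2 : (m : ℤ) ∣ (phi htree (f (i+2)) - phi htree (f (i+1))) := by
      have := phidiff (i+1)
      rw [ar21 i] at this
      exact this hc2
    have dsum : (m : ℤ) ∣ (phi htree (f (i+2)) - phi htree (f i)) := by
      have := dvd_add d1 d2
      rwa [show phi htree (f (i+1)) - phi htree (f i) +
        (phi htree (f (i+2)) - phi htree (f (i+1)))
        = phi htree (f (i+2)) - phi htree (f i) by ring] at this
    have hGadj : ((SimpleGraph.cycleGraph (k+7))ᶜ).Adj i (i+2) := by
      rw [SimpleGraph.compl_adj]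
      refine ⟨i02 i, ?_⟩
      rw [cycAdj']
      rintro (h | h)
      · rw [ar23 i] at h
        exact i03 i h
      · exact i21 i h
    obtain ⟨ℓ, hnd, hor⟩ := (hadj i (i+2) (i02 i)).mp hGadj
    apply hnd
    rcases hor with h | h
    · have he := phi_dirPath hasym htree h
      have : (m : ℤ) ∣ (ℓ : ℤ) := by
        rw [show (ℓ : ℤ) = phi htree (f (i+2)) - phi htree (f i) by omega]
        exact dsum
      exact_mod_cast this
    · have he := phi_dirPath hasym htree h
      have : (m : ℤ) ∣ (ℓ : ℤ) := by
        rw [show (ℓ : ℤ) = -(phi htree (f (i+2)) - phi htree (f i)) by omega]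
        exact dvd_neg.mpr dsum
      exact_mod_cast this
  exact main_comb (x := f) (lt := rlt r)
    (fun a b h1 h2 => rlt_asymm hasym htree h1 h2)
    (fun a b c h1 h2 => rlt_trans hasym htree h1 h2)
    (fun i j hij => hinj.ne hij)
    H1 H2
    (fun a b c d h1 h2 h3 h4 hne => rlt_T4 hasym htree h1 h2 h3 h4 hne)
end
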